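/- arXiv:2307.14085 — 7 statements merged into one kernel-verified Lean document; each statement's English description precedes it below -/
import Mathlib

section
/- Bernstein-type bound for nonnegative-mean independent random variables. Let Z_1,…,Z_T be independent real-valued random variables on a probability space, and let B > 0, L > 0 be constants such that |Z_i − E[Z_i]| ≤ B almost surely and Var[Z_i] ≤ L·E[Z_i] for every i ∈ [T]. Then for every δ ∈ (0,1), with probability at least 1 − δ: |(1/T)·Σ_{i=1}^T (Z_i − E[Z_i])| ≤ (1/(2T))·Σ_{i=1}^T E[Z_i] + (2L + 4B/3)·log(2/δ)/T. -/
/-!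
Centre the variables. Chernoff's bound, fed with the pointwise estimate
`exp y ≤ 1 + y + y² / (2 (1 - u / 3))` for `y ≤ u < 3`, gives the Bernstein tail
`P(|∑ (Z i - E Z i)| ≥ t) ≤ 2 exp (-t² / (2 V + B t))` with `V = ∑ Var Z i`.
Since `V ≤ L ∑ E Z i`, the choice `t = (∑ E Z i) / 2 + (2 L + 4 B / 3) log (2 / δ)` makes the
exponent at least `log (2 / δ)`, so the tail is at most `δ`; dividing by `T` gives the bound.
-/

open MeasureTheory ProbabilityTheory Real

namespace Real

lemma exp_le_one_add_add_sq_div_two_of_nonpos {y : ℝ} (hy : y ≤ 0) :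
    exp y ≤ 1 + y + y ^ 2 / 2 := by
  -- `(1 + y + y²/2)(1 - y + y²/2) = 1 + y⁴/4`, and `1 - y + y²/2 ≤ exp (-y)`
  have hq : 1 - y + y ^ 2 / 2 ≤ exp (-y) := by
    simpa [sub_eq_add_neg] using quadratic_le_exp_of_nonneg (neg_nonneg.2 hy)
  have hpos : 0 < 1 - y + y ^ 2 / 2 := by nlinarith
  rw [exp_neg, le_inv_comm₀ hpos (exp_pos y)] at hq
  refine hq.trans ((inv_le_iff_one_le_mul₀ hpos).2 ?_)
  nlinarith [pow_two_nonneg (y ^ 2)]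

lemma three_sub_mul_exp_le_of_nonneg {y : ℝ} (hy : 0 ≤ y) :
    (3 - y) * exp y ≤ 3 + 2 * y + y ^ 2 / 2 := by
  set f : ℝ → ℝ := fun z => (3 + 2 * z + z ^ 2 / 2) * exp (-z) + z
  have hf : ∀ z, HasDerivAt f (1 - (1 + z + z ^ 2 / 2) * exp (-z)) z := fun z => by
    have := ((((hasDerivAt_id z).const_mul 2).const_add 3).add
      ((hasDerivAt_pow 2 z).div_const 2)).mul (hasDerivAt_neg z).exp |>.add (hasDerivAt_id z)
    exact this.congr_deriv (by
      simp only [mul_one, Nat.cast_ofNat, Nat.add_one_sub_one, pow_one, id_eq, Pi.add_apply, mul_neg]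
      ring)
  have hmono : MonotoneOn f (Set.Ici 0) := by
    refine monotoneOn_of_hasDerivWithinAt_nonneg (convex_Ici 0)
      (fun z _ => (hf z).continuousAt.continuousWithinAt) (fun z _ => (hf z).hasDerivWithinAt)
      fun z hz => ?_
    rw [interior_Ici, Set.mem_Ioi] at hz
    rw [sub_nonneg, ← le_div_iff₀ (exp_pos _), exp_neg, div_inv_eq_mul, one_mul]
    exact quadratic_le_exp_of_nonneg hz.le
  have h : f 0 ≤ f y := hmono Set.self_mem_Ici hy hy
  norm_num [f] at h
  rw [← le_div_iff₀ (exp_pos y), div_eq_mul_inv, ← exp_neg]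
  linarith

lemma exp_le_one_add_add_sq_div_of_le {u y : ℝ} (hu₀ : 0 ≤ u) (hu₃ : u < 3) (hy : y ≤ u) :
    exp y ≤ 1 + y + y ^ 2 / (2 * (1 - u / 3)) := by
  have hden : 0 < 2 * (1 - u / 3) := by linarith
  rcases le_total y 0 with hy₀ | hy₀
  · have : y ^ 2 / 2 ≤ y ^ 2 / (2 * (1 - u / 3)) :=
      div_le_div_of_nonneg_left (sq_nonneg y) hden (by linarith)
    linarith [exp_le_one_add_add_sq_div_two_of_nonpos hy₀]
  · rw [← sub_le_iff_le_add', le_div_iff₀ hden]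
    nlinarith [three_sub_mul_exp_le_of_nonneg hy₀, add_one_le_exp y]

end Real

section Bernstein

variable {Ω : Type*} [MeasurableSpace Ω] {μ : Measure Ω} [IsProbabilityMeasure μ]

lemma mgf_le_exp_variance_of_abs_le {X : Ω → ℝ} (hX : AEMeasurable X μ) (hmean : μ[X] = 0)
    {B s : ℝ} (hbound : ∀ᵐ ω ∂μ, |X ω| ≤ B) (hs : 0 ≤ s) (hsB : s * B < 3) :
    mgf X μ s ≤ exp (s ^ 2 * Var[X; μ] / (2 * (1 - s * B / 3))) := by
  have hB : 0 ≤ B := by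
    obtain ⟨ω, hω⟩ := hbound.exists
    exact (abs_nonneg _).trans hω
  set K := 1 / (2 * (1 - s * B / 3))
  have hX2 : MemLp X 2 μ := MemLp.of_bound hX.aestronglyMeasurable B
    (hbound.mono fun ω h => by rwa [Real.norm_eq_abs])
  have hpoint : ∀ᵐ ω ∂μ, exp (s * X ω) ≤ 1 + s * X ω + K * s ^ 2 * X ω ^ 2 := by
    filter_upwards [hbound] with ω hω
    have := exp_le_one_add_add_sq_div_of_le (mul_nonneg hs hB) hsB
      (mul_le_mul_of_nonneg_left (abs_le.1 hω).2 hs)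
    convert this using 2
    simp only [K]; ring
  have hint₁ : Integrable (fun ω => 1 + s * X ω) μ :=
    (integrable_const 1).add ((hX2.integrable one_le_two).const_mul s)
  have hint₂ : Integrable (fun ω => K * s ^ 2 * X ω ^ 2) μ := hX2.integrable_sq.const_mul _
  calc mgf X μ s ≤ ∫ ω, (1 + s * X ω + K * s ^ 2 * X ω ^ 2) ∂μ :=
        integral_mono_ae
          (integrable_exp_mul_of_le s B hs hX (hbound.mono fun ω h => (abs_le.1 h).2))
          (hint₁.add hint₂) hpoint
    _ = 1 + K * s ^ 2 * Var[X; μ] := by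
        rw [integral_add hint₁ hint₂, integral_add (integrable_const 1)
            ((hX2.integrable one_le_two).const_mul s), integral_const_mul, integral_const_mul,
          hmean, variance_of_integral_eq_zero hX hmean]
        simp
    _ ≤ exp (K * s ^ 2 * Var[X; μ]) := by linarith [add_one_le_exp (K * s ^ 2 * Var[X; μ])]
    _ = exp (s ^ 2 * Var[X; μ] / (2 * (1 - s * B / 3))) := by simp only [K]; ring_nf

theorem measureReal_sum_ge_le_exp {ι : Type*} [Fintype ι] {X : ι → Ω → ℝ}
    (hmeas : ∀ i, Measurable (X i)) (hindep : iIndepFun X μ) (hmean : ∀ i, μ[X i] = 0)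
    {B : ℝ} (hB : 0 < B) (hbound : ∀ i, ∀ᵐ ω ∂μ, |X i ω| ≤ B) {t : ℝ} (ht : 0 < t) :
    μ.real {ω | t ≤ ∑ i, X i ω} ≤ exp (-(t ^ 2 / (2 * ∑ i, Var[X i; μ] + B * t))) := by
  set V := ∑ i, Var[X i; μ]
  have hV : 0 ≤ V := Finset.sum_nonneg fun i _ => variance_nonneg _ _
  have hD : 0 < 2 * V + B * t := by positivity
  -- the optimal `t / (V + B * t / 3)` would violate `s * B < 3` when `V = 0`
  set s := 2 * t / (2 * V + B * t)
  have hs : 0 ≤ s := by positivity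
  have hsB : s * B < 3 := by
    rw [div_mul_eq_mul_div, div_lt_iff₀ hD]; nlinarith [mul_pos hB ht]
  have hchernoff := measure_ge_le_exp_mul_mgf (X := ∑ i, X i) t hs
    (hindep.integrable_exp_mul_sum hmeas fun i _ => integrable_exp_mul_of_le s B hs
      (hmeas i).aemeasurable ((hbound i).mono fun ω h => (abs_le.1 h).2))
  rw [hindep.mgf_sum hmeas] at hchernoff
  have hprod : ∏ i, mgf (X i) μ s ≤ exp (s ^ 2 * V / (2 * (1 - s * B / 3))) := by
    calc ∏ i, mgf (X i) μ s ≤ ∏ i, exp (s ^ 2 * Var[X i; μ] / (2 * (1 - s * B / 3))) :=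
          Finset.prod_le_prod (fun _ _ => mgf_nonneg) fun i _ =>
            mgf_le_exp_variance_of_abs_le (hmeas i).aemeasurable (hmean i) (hbound i) hs hsB
      _ = exp (s ^ 2 * V / (2 * (1 - s * B / 3))) := by
          rw [← exp_sum, ← Finset.sum_div, ← Finset.mul_sum]
  have hexponent :
      -s * t + s ^ 2 * V / (2 * (1 - s * B / 3)) ≤ -(t ^ 2 / (2 * V + B * t)) := by
    have h6 : 0 < 6 * V + B * t := by positivity
    have hquad : s ^ 2 * V / (2 * (1 - s * B / 3))
        = 6 * t ^ 2 * V / ((2 * V + B * t) * (6 * V + B * t)) := by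
      have hgap : 1 - s * B / 3 = (6 * V + B * t) / (3 * (2 * V + B * t)) := by
        simp only [s]; field_simp; ring
      rw [hgap]; simp only [s]; field_simp; ring
    have hlin : s * t = 2 * (t ^ 2 / (2 * V + B * t)) := by simp only [s]; ring
    have hle :
        6 * t ^ 2 * V / ((2 * V + B * t) * (6 * V + B * t)) ≤ t ^ 2 / (2 * V + B * t) := by
      rw [div_le_div_iff₀ (by positivity) hD]
      nlinarith [mul_nonneg (mul_nonneg (sq_nonneg t) hD.le) (mul_pos hB ht).le]
    rw [hquad, neg_mul, hlin]
    linarith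
  calc μ.real {ω | t ≤ ∑ i, X i ω}
      ≤ exp (-s * t) * exp (s ^ 2 * V / (2 * (1 - s * B / 3))) := by
        simpa [Finset.sum_apply] using
          hchernoff.trans (mul_le_mul_of_nonneg_left hprod (exp_pos _).le)
    _ ≤ exp (-(t ^ 2 / (2 * V + B * t))) := by rw [← exp_add]; exact exp_le_exp.2 hexponent

theorem measureReal_abs_sum_ge_le_two_mul_exp {ι : Type*} [Fintype ι] {X : ι → Ω → ℝ}
    (hmeas : ∀ i, Measurable (X i)) (hindep : iIndepFun X μ) (hmean : ∀ i, μ[X i] = 0)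
    {B : ℝ} (hB : 0 < B) (hbound : ∀ i, ∀ᵐ ω ∂μ, |X i ω| ≤ B) {t : ℝ} (ht : 0 < t) :
    μ.real {ω | t ≤ |∑ i, X i ω|} ≤
      2 * exp (-(t ^ 2 / (2 * ∑ i, Var[X i; μ] + B * t))) := by
  have hupper := measureReal_sum_ge_le_exp hmeas hindep hmean hB hbound ht
  have hlower := measureReal_sum_ge_le_exp (X := fun i ω => -X i ω) (fun i => (hmeas i).neg)
    (hindep.comp (fun _ x => -x) fun _ => measurable_neg)
    (fun i => by rw [integral_neg, hmean i, neg_zero]) hB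
    (fun i => (hbound i).mono fun ω h => by rwa [abs_neg]) ht
  simp only [variance_fun_neg, Finset.sum_neg_distrib] at hlower
  have hsplit :
      {ω | t ≤ |∑ i, X i ω|} ⊆ {ω | t ≤ ∑ i, X i ω} ∪ {ω | t ≤ -∑ i, X i ω} :=
    fun _ => by simpa only [Set.mem_union, Set.mem_ofPred_eq] using le_abs.1
  calc μ.real {ω | t ≤ |∑ i, X i ω|}
      ≤ μ.real {ω | t ≤ ∑ i, X i ω} + μ.real {ω | t ≤ -∑ i, X i ω} :=
        (measureReal_mono hsplit).trans (measureReal_union_le _ _)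
    _ ≤ _ := by linarith

theorem measureReal_abs_sum_sub_integral_ge_le {ι : Type*} [Fintype ι] {Z : ι → Ω → ℝ}
    (hmeas : ∀ i, Measurable (Z i)) (hint : ∀ i, Integrable (Z i) μ)
    (hindep : iIndepFun Z μ) {B : ℝ} (hB : 0 < B) (hbound : ∀ i, ∀ᵐ ω ∂μ, |Z i ω - μ[Z i]| ≤ B)
    {t : ℝ} (ht : 0 < t) :
    μ.real {ω | t ≤ |∑ i, (Z i ω - μ[Z i])|} ≤
      2 * exp (-(t ^ 2 / (2 * ∑ i, Var[Z i; μ] + B * t))) := by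
  have := measureReal_abs_sum_ge_le_two_mul_exp (X := fun i ω => Z i ω - μ[Z i])
    (fun i => (hmeas i).sub_const _)
    (hindep.comp (fun i y => y - ∫ ω, Z i ω ∂μ) fun i => measurable_id.sub_const _)
    (fun i => by simp [integral_sub (hint i) (integrable_const _)]) hB hbound ht
  simpa only [variance_sub_const (hmeas _).aestronglyMeasurable] using this

lemma ofReal_one_sub_le_measure_lt_of_measureReal_ge_le {f : Ω → ℝ} (hf : Measurable f)
    {t δ : ℝ} (h : μ.real {ω | t ≤ f ω} ≤ δ) :
    ENNReal.ofReal (1 - δ) ≤ μ {ω | f ω < t} := by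
  rw [← ofReal_measureReal]
  refine ENNReal.ofReal_le_ofReal ?_
  simp_rw [← not_le]
  rw [← Set.compl_ofPred, probReal_compl_eq_one_sub (measurableSet_le measurable_const hf)]
  linarith

end Bernstein

lemma le_sq_div_two_mul_add_mul {B L M V ℓ : ℝ} (hB : 0 < B) (hL : 0 ≤ L) (hM : 0 ≤ M)
    (hV₀ : 0 ≤ V) (hV : V ≤ L * M) (hℓ : 0 < ℓ) :
    ℓ ≤ (M / 2 + (2 * L + 4 * B / 3) * ℓ) ^ 2 /
      (2 * V + B * (M / 2 + (2 * L + 4 * B / 3) * ℓ)) := by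
  rw [le_div_iff₀ (by positivity)]
  nlinarith [mul_le_mul_of_nonneg_left hV (by positivity : (0:ℝ) ≤ 2 * ℓ),
    mul_nonneg (mul_nonneg hM hℓ.le) hB.le, mul_nonneg (mul_nonneg hℓ.le hℓ.le) hL,
    mul_nonneg (mul_nonneg hℓ.le hℓ.le) (mul_nonneg hL hB.le),
    mul_nonneg (mul_nonneg hℓ.le hℓ.le) (mul_nonneg hL hL),
    mul_nonneg (mul_nonneg hℓ.le hℓ.le) (mul_pos hB hB).le]

theorem bernstein_nonneg_mean_general
    {Ω : Type*} [MeasurableSpace Ω] (μ : Measure Ω) [IsProbabilityMeasure μ]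
    (T : ℕ) (Z : Fin T → Ω → ℝ)
    (hmeas : ∀ i, Measurable (Z i))
    (hint : ∀ i, Integrable (Z i) μ)
    (hindep : iIndepFun Z μ)
    (B L : ℝ) (hB : 0 < B) (hL : 0 < L)
    (hbound : ∀ i, ∀ᵐ ω ∂μ, |Z i ω - ∫ ω', Z i ω' ∂μ| ≤ B)
    (hvar : ∀ i, variance (Z i) μ ≤ L * ∫ ω', Z i ω' ∂μ)
    (δ : ℝ) (hδ0 : 0 < δ) (hδ1 : δ < 1) :
    ENNReal.ofReal (1 - δ) ≤
      μ {ω | |(1 / (T : ℝ)) * ∑ i, (Z i ω - ∫ ω', Z i ω' ∂μ)| ≤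
        (1 / (2 * (T : ℝ))) * ∑ i, (∫ ω', Z i ω' ∂μ) +
          (2 * L + 4 * B / 3) * Real.log (2 / δ) / (T : ℝ)} := by
  set M := ∑ i, ∫ ω', Z i ω' ∂μ
  set ℓ := log (2 / δ)
  set t := M / 2 + (2 * L + 4 * B / 3) * ℓ
  have hM : 0 ≤ M := Finset.sum_nonneg fun i _ =>
    nonneg_of_mul_nonneg_right ((variance_nonneg _ _).trans (hvar i)) hL
  have hV : ∑ i, Var[Z i; μ] ≤ L * M :=
    Finset.mul_sum _ _ L ▸ Finset.sum_le_sum fun i _ => hvar i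
  have hℓ : 0 < ℓ := log_pos (by rw [lt_div_iff₀ hδ0]; linarith)
  have htail : μ.real {ω | t ≤ |∑ i, (Z i ω - ∫ ω', Z i ω' ∂μ)|} ≤ δ := calc
    _ ≤ 2 * exp (-(t ^ 2 / (2 * ∑ i, Var[Z i; μ] + B * t))) :=
      measureReal_abs_sum_sub_integral_ge_le hmeas hint hindep hB hbound (by positivity)
    _ ≤ 2 * exp (-ℓ) := by
      gcongr
      exact le_sq_div_two_mul_add_mul hB hL.le hM
        (Finset.sum_nonneg fun i _ => variance_nonneg _ _) hV hℓ
    _ = δ := by rw [exp_neg, exp_log (by positivity)]; field_simp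
  refine (ofReal_one_sub_le_measure_lt_of_measureReal_ge_le (by fun_prop) htail).trans
    (measure_mono fun ω hω => ?_)
  have hrhs : 1 / (2 * (T : ℝ)) * M + (2 * L + 4 * B / 3) * ℓ / T = t / T := by ring
  simp only [Set.mem_ofPred_eq] at hω ⊢
  rw [hrhs, abs_mul, abs_of_nonneg (by positivity), one_div_mul_eq_div]
  exact div_le_div_of_nonneg_right hω.le (Nat.cast_nonneg T)

/-- Bernstein-type bound for independent random variables whose variance is controlled by
their mean: if `|Z_i − E[Z_i]| ≤ B` a.s. and `Var[Z_i] ≤ L·E[Z_i]`, then with probability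
at least `1 − δ`,
`|(1/T) Σ_i (Z_i − E[Z_i])| ≤ (1/(2T)) Σ_i E[Z_i] + (2L + 4B/3)·log(2/δ)/T`. -/
theorem bernstein_nonneg_mean
    {Ω : Type*} [MeasurableSpace Ω] (μ : Measure Ω) [IsProbabilityMeasure μ]
    (T : ℕ) (hT : 1 ≤ T) (Z : Fin T → Ω → ℝ)
    (hmeas : ∀ i, Measurable (Z i))
    (hint : ∀ i, Integrable (Z i) μ)
    (hindep : iIndepFun Z μ)
    (B L : ℝ) (hB : 0 < B) (hL : 0 < L)
    (hbound : ∀ i, ∀ᵐ ω ∂μ, |Z i ω - ∫ ω', Z i ω' ∂μ| ≤ B)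
    (hvar : ∀ i, variance (Z i) μ ≤ L * ∫ ω', Z i ω' ∂μ)
    (δ : ℝ) (hδ0 : 0 < δ) (hδ1 : δ < 1) :
    ENNReal.ofReal (1 - δ) ≤
      μ {ω | |(1 / (T : ℝ)) * ∑ i, (Z i ω - ∫ ω', Z i ω' ∂μ)| ≤
        (1 / (2 * (T : ℝ))) * ∑ i, (∫ ω', Z i ω' ∂μ) +
          (2 * L + 4 * B / 3) * Real.log (2 / δ) / (T : ℝ)} :=
  bernstein_nonneg_mean_general μ T Z hmeas hint hindep B L hB hL hbound hvar δ hδ0 hδ1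
end

section
/- Difference of advantage functions (soft Bellman decomposition). Fix a leader policy π with quantal response ν = ν^π. For h ∈ [H] and (s,b) ∈ S×B define Δ_h⁽¹⁾(s,b) = E_{s,b}[ Σ_{i=h}^H γ^{i−h}·(r_i^π + γ·P_i^π Ṽ_{i+1} − Q̃_i)(s_i,b_i) ] and Δ_h⁽²⁾(s) = E_s[ Σ_{i=h}^H γ^{i−h}·KL(ν_i(·|s_i) ‖ ν̃_i(·|s_i)) ], with the convention Δ_{H+1}⁽²⁾ ≡ 0 and (P_i^π Ṽ_{i+1})(s,b) = Σ_{s'} P_i^π(s'|s,b)·Ṽ_{i+1}(s'). Then for all h ∈ [H] and (s,b) ∈ S×B: A_h^π(s,b) − Ã_h(s,b) = (E_{s,b} − E_s)[ Δ_h⁽¹⁾(s_h,b_h) − γ·η⁻¹·Δ_{h+1}⁽²⁾(s_{h+1}) ] + η⁻¹·KL(ν_h(·|s) ‖ ν̃_h(·|s)). Moreover KL(ν_h(·|s) ‖ ν̃_h(·|s)) = η·Σ_b ν_h(b|s)·(A_h^π(s,b) − Ã_h(s,b)), and V_h^π(s) − Ṽ_h(s) = Σ_b ν_h(b|s)·(Q_h^π(s,b)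 − Q̃_h(s,b)) − η⁻¹·KL(ν_h(·|s) ‖ ν̃_h(·|s)). -/
open Finset

noncomputable section

namespace QSE

variable {S A B : Type}

/-- Follower reward under the leader policy: `r_h^π(s,b) = Σ_a π_h(a|s,b) r_h(s,a,b)`. -/
def rPol [Fintype A] (pol : ℕ → S → B → A → ℝ) (r : ℕ → S → A → B → ℝ)
    (h : ℕ) (s : S) (b : B) : ℝ :=
  ∑ a, pol h s b a * r h s a b

/-- Transition under the leader policy: `P_h^π(s'|s,b) = Σ_a π_h(a|s,b) P_h(s'|s,a,b)`. -/
def pPol [Fintype A] (pol : ℕ → S → B → A → ℝ) (P : ℕ → S → A → B → S → ℝ)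
    (h : ℕ) (s : S) (b : B) (s' : S) : ℝ :=
  ∑ a, pol h s b a * P h s a b s'

/-- Fuel-indexed soft state value: `vAux n = V_{H−n}^π` (steps are 0-based, `V_H ≡ 0`). -/
def vAux [Fintype S] [Fintype A] [Fintype B] (η γ : ℝ) (H : ℕ)
    (pol : ℕ → S → B → A → ℝ) (r : ℕ → S → A → B → ℝ)
    (P : ℕ → S → A → B → S → ℝ) : ℕ → S → ℝ
  | 0, _ => 0
  | n + 1, s =>
      η⁻¹ * Real.log (∑ b, Real.exp (η * (rPol pol r (H - (n + 1)) s b +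
        γ * ∑ s', pPol pol P (H - (n + 1)) s b s' * vAux η γ H pol r P n s')))

/-- Follower soft state value `V_h^π` (0-based step `h`, so `V_H ≡ 0`). -/
def softV [Fintype S] [Fintype A] [Fintype B] (η γ : ℝ) (H : ℕ)
    (pol : ℕ → S → B → A → ℝ) (r : ℕ → S → A → B → ℝ)
    (P : ℕ → S → A → B → S → ℝ) (h : ℕ) (s : S) : ℝ :=
  vAux η γ H pol r P (H - h) s

/-- Follower soft action value `Q_h^π(s,b) = r_h^π(s,b) + γ Σ_{s'} P_h^π(s'|s,b) V_{h+1}^π(s')`. -/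
def softQ [Fintype S] [Fintype A] [Fintype B] (η γ : ℝ) (H : ℕ)
    (pol : ℕ → S → B → A → ℝ) (r : ℕ → S → A → B → ℝ)
    (P : ℕ → S → A → B → S → ℝ) (h : ℕ) (s : S) (b : B) : ℝ :=
  rPol pol r h s b + γ * ∑ s', pPol pol P h s b s' * softV η γ H pol r P (h + 1) s'

/-- Follower advantage `A_h^π = Q_h^π − V_h^π`. -/
def softA [Fintype S] [Fintype A] [Fintype B] (η γ : ℝ) (H : ℕ)
    (pol : ℕ → S → B → A → ℝ) (r : ℕ → S → A → B → ℝ)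
    (P : ℕ → S → A → B → S → ℝ) (h : ℕ) (s : S) (b : B) : ℝ :=
  softQ η γ H pol r P h s b - softV η γ H pol r P h s

/-- Quantal response `ν_h^π(b|s) = exp(η A_h^π(s,b))`. -/
def qr [Fintype S] [Fintype A] [Fintype B] (η γ : ℝ) (H : ℕ)
    (pol : ℕ → S → B → A → ℝ) (r : ℕ → S → A → B → ℝ)
    (P : ℕ → S → A → B → S → ℝ) (h : ℕ) (s : S) (b : B) : ℝ :=
  Real.exp (η * softA η γ H pol r P h s b)

/-- Marginal law of the state `s_h` along the trajectory generated by `(ρ₀, ν, π, P)`. -/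
def margS [Fintype S] [Fintype A] [Fintype B] (rho0 : S → ℝ)
    (pol : ℕ → S → B → A → ℝ) (nu : ℕ → S → B → ℝ)
    (P : ℕ → S → A → B → S → ℝ) : ℕ → S → ℝ
  | 0, s => rho0 s
  | h + 1, s' => ∑ s, ∑ b, ∑ a,
      margS rho0 pol nu P h s * nu h s b * pol h s b a * P h s a b s'

/-- Integral operator `(T_h^{π,ν} f)(s) = Σ_{a,b} π_h(a|s,b) ν_h(b|s) f(s,a,b)`. -/
def Top [Fintype A] [Fintype B] (pol : ℕ → S → B → A → ℝ) (nu : ℕ → S → B → ℝ)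
    (h : ℕ) (f : S → A → B → ℝ) (s : S) : ℝ :=
  ∑ b, ∑ a, nu h s b * pol h s b a * f s a b

/-- Leader's value `J(π) = E^{π,ν^π}[Σ_{h<H} u_h(s_h,a_h,b_h)]`. -/
def Jval [Fintype S] [Fintype A] [Fintype B] (η γ : ℝ) (H : ℕ) (rho0 : S → ℝ)
    (pol : ℕ → S → B → A → ℝ) (r : ℕ → S → A → B → ℝ)
    (P : ℕ → S → A → B → S → ℝ) (u : ℕ → S → A → B → ℝ) : ℝ :=
  ∑ h ∈ Finset.range H, ∑ s, ∑ b, ∑ a,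
    margS rho0 pol (qr η γ H pol r P) P h s * qr η γ H pol r P h s b *
      pol h s b a * u h s a b

/-- Fuel-indexed conditional discounted cumulative value:
`cumAux n s b = E[Σ_{l=H−n}^{H−1} γ^{l−(H−n)} X_l(s_l,b_l) | s_{H−n} = s, b_{H−n} = b]`. -/
def cumAux [Fintype S] [Fintype A] [Fintype B] (γ : ℝ) (H : ℕ)
    (pol : ℕ → S → B → A → ℝ) (nu : ℕ → S → B → ℝ)
    (P : ℕ → S → A → B → S → ℝ) (X : ℕ → S → B → ℝ) : ℕ → S → B → ℝ
  | 0, _, _ => 0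
  | n + 1, s, b => X (H - (n + 1)) s b +
      γ * ∑ a, pol (H - (n + 1)) s b a * ∑ s', P (H - (n + 1)) s a b s' *
          ∑ b', nu (H - n) s' b' * cumAux γ H pol nu P X n s' b'

/-- `cumSB h s b = E[Σ_{l=h}^{H−1} γ^{l−h} X_l(s_l,b_l) | s_h = s, b_h = b]`. -/
def cumSB [Fintype S] [Fintype A] [Fintype B] (γ : ℝ) (H : ℕ)
    (pol : ℕ → S → B → A → ℝ) (nu : ℕ → S → B → ℝ)
    (P : ℕ → S → A → B → S → ℝ) (X : ℕ → S → B → ℝ) (h : ℕ) (s : S) (b : B) : ℝ :=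
  cumAux γ H pol nu P X (H - h) s b

/-- Estimated soft state value `Ṽ_h` derived from `Q̃` (with `Ṽ_H ≡ 0`). -/
def vTil [Fintype B] (η : ℝ) (H : ℕ) (Qt : ℕ → S → B → ℝ) (h : ℕ) (s : S) : ℝ :=
  if h < H then η⁻¹ * Real.log (∑ b, Real.exp (η * Qt h s b)) else 0

/-- Estimated advantage `Ã_h = Q̃_h − Ṽ_h`. -/
def aTil [Fintype B] (η : ℝ) (H : ℕ) (Qt : ℕ → S → B → ℝ) (h : ℕ) (s : S) (b : B) : ℝ :=
  Qt h s b - vTil η H Qt h s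

/-- Estimated quantal response `ν̃_h(b|s) = exp(η Ã_h(s,b))`. -/
def nuTil [Fintype B] (η : ℝ) (H : ℕ) (Qt : ℕ → S → B → ℝ) (h : ℕ) (s : S) (b : B) : ℝ :=
  Real.exp (η * aTil η H Qt h s b)

/-- Follower Bellman residual `(Q̃_h − r_h^π − γ P_h^π Ṽ_{h+1})(s,b)`. -/
def bres [Fintype S] [Fintype A] [Fintype B] (η γ : ℝ) (H : ℕ)
    (pol : ℕ → S → B → A → ℝ) (r : ℕ → S → A → B → ℝ)
    (P : ℕ → S → A → B → S → ℝ) (Qt : ℕ → S → B → ℝ) (h : ℕ) (s : S) (b : B) : ℝ :=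
  Qt h s b - rPol pol r h s b - γ * ∑ s', pPol pol P h s b s' * vTil η H Qt (h + 1) s'

/-- First-order quantal response error
`Δ̃_h⁽¹⁾(s,b) = (E_{s,b} − E_s)[Σ_{l=h}^{H−1} γ^{l−h}(Q̃_l − r_l^π − γ P_l^π Ṽ_{l+1})(s_l,b_l)]`. -/
def del1 [Fintype S] [Fintype A] [Fintype B] (η γ : ℝ) (H : ℕ)
    (pol : ℕ → S → B → A → ℝ) (r : ℕ → S → A → B → ℝ)
    (P : ℕ → S → A → B → S → ℝ) (Qt : ℕ → S → B → ℝ) (h : ℕ) (s : S) (b : B) : ℝ :=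
  cumSB γ H pol (qr η γ H pol r P) P (bres η γ H pol r P Qt) h s b -
    ∑ b', qr η γ H pol r P h s b' *
      cumSB γ H pol (qr η γ H pol r P) P (bres η γ H pol r P Qt) h s b'

/-- Geometric sum `eff_H(x) = Σ_{i<H} x^i`. -/
def effH (H : ℕ) (x : ℝ) : ℝ := ∑ i ∈ Finset.range H, x ^ i

end QSE

namespace QSE

/-- Pointwise KL divergence between the true and estimated quantal responses at `(h,s)`. -/
def klQR [Fintype S] [Fintype A] [Fintype B] (η γ : ℝ) (H : ℕ)
    (pol : ℕ → S → B → A → ℝ) (r : ℕ → S → A → B → ℝ)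
    (P : ℕ → S → A → B → S → ℝ) (Qt : ℕ → S → B → ℝ) (h : ℕ) (s : S) : ℝ :=
  ∑ b, qr η γ H pol r P h s b *
    Real.log (qr η γ H pol r P h s b / nuTil η H Qt h s b)

/-- `Δ_h⁽¹⁾(s,b) = E_{s,b}[Σ_{i=h}^{H−1} γ^{i−h}(r_i^π + γ P_i^π Ṽ_{i+1} − Q̃_i)(s_i,b_i)]`. -/
def delta1' [Fintype S] [Fintype A] [Fintype B] (η γ : ℝ) (H : ℕ)
    (pol : ℕ → S → B → A → ℝ) (r : ℕ → S → A → B → ℝ)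
    (P : ℕ → S → A → B → S → ℝ) (Qt : ℕ → S → B → ℝ) (h : ℕ) (s : S) (b : B) : ℝ :=
  cumSB γ H pol (qr η γ H pol r P) P
    (fun l s' b' => rPol pol r l s' b' +
      γ * ∑ s'', pPol pol P l s' b' s'' * vTil η H Qt (l + 1) s'' - Qt l s' b')
    h s b

/-- `Δ_h⁽²⁾(s) = E_s[Σ_{i=h}^{H−1} γ^{i−h} KL(ν_i(·|s_i) ‖ ν̃_i(·|s_i))]`
(so `Δ_H⁽²⁾ ≡ 0`). -/
def delta2 [Fintype S] [Fintype A] [Fintype B] (η γ : ℝ) (H : ℕ)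
    (pol : ℕ → S → B → A → ℝ) (r : ℕ → S → A → B → ℝ)
    (P : ℕ → S → A → B → S → ℝ) (Qt : ℕ → S → B → ℝ) (h : ℕ) (s : S) : ℝ :=
  ∑ b, qr η γ H pol r P h s b *
    cumSB γ H pol (qr η γ H pol r P) P
      (fun l s' _ => klQR η γ H pol r P Qt l s') h s b

end QSE

open QSE


namespace QSEAux

open QSE

variable {S A B : Type} [Fintype S] [Fintype A] [Fintype B] [Nonempty B]
variable (η γ : ℝ) (H : ℕ) (pol : ℕ → S → B → A → ℝ) (r : ℕ → S → A → B → ℝ)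
  (P : ℕ → S → A → B → S → ℝ) (Qt : ℕ → S → B → ℝ)

lemma softV_eq {h : ℕ} (hh : h < H) (s : S) :
    softV η γ H pol r P h s =
      η⁻¹ * Real.log (∑ b, Real.exp (η * softQ η γ H pol r P h s b)) := by
  have h1 : H - h = (H - (h + 1)) + 1 := by omega
  have h2 : H - (H - (h + 1) + 1) = h := by omega
  unfold softV
  rw [h1, vAux, h2]
  rfl

lemma sum_qr_one (hη : 0 < η) {h : ℕ} (hh : h < H) (s : S) :
    ∑ b, qr η γ H pol r P h s b = 1 := by
  have hV := softV_eq η γ H pol r P hh s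
  have hS : 0 < ∑ b, Real.exp (η * softQ η γ H pol r P h s b) :=
    Finset.sum_pos (fun b _ => Real.exp_pos _) Finset.univ_nonempty
  have hexpV : Real.exp (η * softV η γ H pol r P h s) =
      ∑ b, Real.exp (η * softQ η γ H pol r P h s b) := by
    rw [hV, ← mul_assoc, mul_inv_cancel₀ (ne_of_gt hη), one_mul, Real.exp_log hS]
  unfold qr softA
  calc ∑ b, Real.exp (η * (softQ η γ H pol r P h s b - softV η γ H pol r P h s))
      = ∑ b, Real.exp (η * softQ η γ H pol r P h s b) /
          Real.exp (η * softV η γ H pol r P h s) := by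
        refine Finset.sum_congr rfl fun b _ => ?_
        rw [mul_sub, Real.exp_sub]
    _ = 1 := by rw [← Finset.sum_div, hexpV, div_self (ne_of_gt hS)]

lemma klQR_eq (h : ℕ) (s : S) :
    klQR η γ H pol r P Qt h s =
      η * ∑ b, qr η γ H pol r P h s b *
        (softA η γ H pol r P h s b - aTil η H Qt h s b) := by
  unfold klQR
  rw [Finset.mul_sum]
  refine Finset.sum_congr rfl fun b _ => ?_
  unfold qr nuTil
  rw [← Real.exp_sub, Real.log_exp]
  ring

lemma V_diff (hη : 0 < η) {h : ℕ} (hh : h < H) (s : S) :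
    softV η γ H pol r P h s - vTil η H Qt h s =
      (∑ b, qr η γ H pol r P h s b * (softQ η γ H pol r P h s b - Qt h s b)) -
        η⁻¹ * klQR η γ H pol r P Qt h s := by
  rw [klQR_eq, ← mul_assoc, inv_mul_cancel₀ (ne_of_gt hη), one_mul]
  have h1 : ∀ b : B, qr η γ H pol r P h s b *
      (softA η γ H pol r P h s b - aTil η H Qt h s b) =
      qr η γ H pol r P h s b * (softQ η γ H pol r P h s b - Qt h s b) -
      qr η γ H pol r P h s b * (softV η γ H pol r P h s - vTil η H Qt h s) := by
    intro b; unfold softA aTil; ring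
  simp only [h1, Finset.sum_sub_distrib, ← Finset.sum_mul,
    sum_qr_one η γ H pol r P hη hh s, one_mul]
  ring

lemma cumSB_rec (nu : ℕ → S → B → ℝ) (X : ℕ → S → B → ℝ) {h : ℕ} (hh : h < H)
    (s : S) (b : B) :
    cumSB γ H pol nu P X h s b = X h s b +
      γ * ∑ a, pol h s b a * ∑ s', P h s a b s' *
        ∑ b', nu (h + 1) s' b' * cumSB γ H pol nu P X (h + 1) s' b' := by
  have h1 : H - h = (H - (h + 1)) + 1 := by omega
  have h2 : H - (H - (h + 1) + 1) = h := by omega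
  have h3 : H - (H - (h + 1)) = h + 1 := by omega
  unfold cumSB
  rw [h1, cumAux, h2, h3]

lemma cumSB_top (nu : ℕ → S → B → ℝ) (X : ℕ → S → B → ℝ) (s : S) (b : B) :
    cumSB γ H pol nu P X H s b = 0 := by
  unfold cumSB
  rw [Nat.sub_self, cumAux]

lemma delta2_top (s : S) : delta2 η γ H pol r P Qt H s = 0 := by
  unfold delta2
  simp [cumSB_top]

lemma delta2_rec (hη : 0 < η) {h : ℕ} (hh : h < H) (s : S) :
    delta2 η γ H pol r P Qt h s = klQR η γ H pol r P Qt h s +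
      γ * ∑ b, qr η γ H pol r P h s b * ∑ a, pol h s b a *
        ∑ s', P h s a b s' * delta2 η γ H pol r P Qt (h + 1) s' := by
  unfold delta2
  have hd : ∀ s' : S, (∑ b', qr η γ H pol r P (h + 1) s' b' *
      cumSB γ H pol (qr η γ H pol r P) P
        (fun l s'' _ => klQR η γ H pol r P Qt l s'') (h + 1) s' b') =
      delta2 η γ H pol r P Qt (h + 1) s' := fun s' => rfl
  simp only [hd]
  have h1 : ∀ b : B, qr η γ H pol r P h s b *
      cumSB γ H pol (qr η γ H pol r P) P
        (fun l s' _ => klQR η γ H pol r P Qt l s') h s b =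
      qr η γ H pol r P h s b * klQR η γ H pol r P Qt h s +
      γ * (qr η γ H pol r P h s b * ∑ a, pol h s b a * ∑ s', P h s a b s' *
        delta2 η γ H pol r P Qt (h + 1) s') := by
    intro b
    rw [cumSB_rec γ H pol P (qr η γ H pol r P) _ hh s b]
    simp only [hd]
    ring
  simp only [h1]
  rw [Finset.sum_add_distrib, ← Finset.sum_mul,
    sum_qr_one η γ H pol r P hη hh s, one_mul, ← Finset.mul_sum]

lemma swap_sum (h : ℕ) (s : S) (b : B) (f : S → ℝ) :
    ∑ a, pol h s b a * ∑ s', P h s a b s' * f s' =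
      ∑ s', pPol pol P h s b s' * f s' := by
  unfold pPol
  simp only [Finset.mul_sum, Finset.sum_mul]
  rw [Finset.sum_comm]
  exact Finset.sum_congr rfl fun s' _ => Finset.sum_congr rfl fun a _ => by ring

lemma key (hη : 0 < η) : ∀ n h, H - h ≤ n → h < H → ∀ (s : S) (b : B),
    delta1' η γ H pol r P Qt h s b =
      (softQ η γ H pol r P h s b - Qt h s b) +
        γ * η⁻¹ * ∑ a, pol h s b a * ∑ s', P h s a b s' *
          delta2 η γ H pol r P Qt (h + 1) s' := by
  intro n
  induction n with
  | zero => intro h hle hh; omega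
  | succ m ih =>
    intro h hle hh s b
    unfold delta1'
    rw [cumSB_rec γ H pol P (qr η γ H pol r P) _ hh s b]
    by_cases hH1 : h + 1 < H
    · -- inductive case
      have hIH : ∀ (s' : S) (b' : B),
          cumSB γ H pol (qr η γ H pol r P) P
            (fun l s' b' => rPol pol r l s' b' +
              γ * ∑ s'', pPol pol P l s' b' s'' * vTil η H Qt (l + 1) s'' - Qt l s' b')
            (h + 1) s' b' =
          (softQ η γ H pol r P (h + 1) s' b' - Qt (h + 1) s' b') +
            γ * η⁻¹ * ∑ a, pol (h + 1) s' b' a * ∑ s'', P (h + 1) s' a b' s'' *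
              delta2 η γ H pol r P Qt (h + 1 + 1) s'' := by
        intro s' b'
        exact ih (h + 1) (by omega) hH1 s' b'
      have hinner : ∀ s' : S,
          (∑ b', qr η γ H pol r P (h + 1) s' b' *
            cumSB γ H pol (qr η γ H pol r P) P
              (fun l s' b' => rPol pol r l s' b' +
                γ * ∑ s'', pPol pol P l s' b' s'' * vTil η H Qt (l + 1) s'' - Qt l s' b')
              (h + 1) s' b') =
          (softV η γ H pol r P (h + 1) s' - vTil η H Qt (h + 1) s') +
            η⁻¹ * delta2 η γ H pol r P Qt (h + 1) s' := by
        intro s'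
        have e1 : ∀ b' : B, qr η γ H pol r P (h + 1) s' b' *
            ((softQ η γ H pol r P (h + 1) s' b' - Qt (h + 1) s' b') +
              γ * η⁻¹ * ∑ a, pol (h + 1) s' b' a * ∑ s'', P (h + 1) s' a b' s'' *
                delta2 η γ H pol r P Qt (h + 1 + 1) s'') =
            qr η γ H pol r P (h + 1) s' b' *
              (softQ η γ H pol r P (h + 1) s' b' - Qt (h + 1) s' b') +
            η⁻¹ * (γ * (qr η γ H pol r P (h + 1) s' b' *
              ∑ a, pol (h + 1) s' b' a * ∑ s'', P (h + 1) s' a b' s'' *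
                delta2 η γ H pol r P Qt (h + 1 + 1) s'')) := by
          intro b'; ring
        simp only [hIH, e1, Finset.sum_add_distrib, ← Finset.mul_sum]
        rw [V_diff η γ H pol r P Qt hη hH1 s',
          delta2_rec η γ H pol r P Qt hη hH1 s']
        ring
      simp only [hinner]
      have hsw1 : ∑ a, pol h s b a * ∑ s', P h s a b s' *
          ((softV η γ H pol r P (h + 1) s' - vTil η H Qt (h + 1) s') +
            η⁻¹ * delta2 η γ H pol r P Qt (h + 1) s') =
          ∑ s', pPol pol P h s b s' *
          ((softV η γ H pol r P (h + 1) s' - vTil η H Qt (h + 1) s') +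
            η⁻¹ * delta2 η γ H pol r P Qt (h + 1) s') :=
        swap_sum pol P h s b _
      have hsw2 : ∑ a, pol h s b a * ∑ s', P h s a b s' *
          delta2 η γ H pol r P Qt (h + 1) s' =
          ∑ s', pPol pol P h s b s' * delta2 η γ H pol r P Qt (h + 1) s' :=
        swap_sum pol P h s b _
      rw [hsw1, hsw2]
      have e2 : ∀ s' : S, pPol pol P h s b s' *
          ((softV η γ H pol r P (h + 1) s' - vTil η H Qt (h + 1) s') +
            η⁻¹ * delta2 η γ H pol r P Qt (h + 1) s') =
          pPol pol P h s b s' * softV η γ H pol r P (h + 1) s' -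
          pPol pol P h s b s' * vTil η H Qt (h + 1) s' +
          η⁻¹ * (pPol pol P h s b s' * delta2 η γ H pol r P Qt (h + 1) s') := by
        intro s'; ring
      simp only [e2, Finset.sum_add_distrib, Finset.sum_sub_distrib, ← Finset.mul_sum]
      simp only [softQ]
      ring
    · -- terminal case: h + 1 = H
      have hHH : h + 1 = H := by omega
      have hz : ∀ (s' : S) (b' : B),
          cumSB γ H pol (qr η γ H pol r P) P
            (fun l s' b' => rPol pol r l s' b' +
              γ * ∑ s'', pPol pol P l s' b' s'' * vTil η H Qt (l + 1) s'' - Qt l s' b')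
            (h + 1) s' b' = 0 := by
        intro s' b'; rw [hHH]; exact cumSB_top γ H pol P _ _ s' b'
      have hz2 : ∀ s' : S, delta2 η γ H pol r P Qt (h + 1) s' = 0 := by
        intro s'; rw [hHH]; exact delta2_top η γ H pol r P Qt s'
      have hvT : ∀ s' : S, vTil η H Qt (h + 1) s' = 0 := by
        intro s'; unfold vTil; rw [hHH]; simp
      have hsV : ∀ s' : S, softV η γ H pol r P (h + 1) s' = 0 := by
        intro s'; unfold softV; rw [hHH, Nat.sub_self]; rfl
      simp only [hz, hz2, hvT, hsV, mul_zero, Finset.sum_const_zero, add_zero,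
        zero_mul, softQ]

end QSEAux

/-- Difference of advantage functions (soft Bellman decomposition); steps are 0-based.
For all `h < H`, `s`, `b`:
`A_h^π(s,b) − Ã_h(s,b) = (E_{s,b} − E_s)[Δ_h⁽¹⁾(s_h,b_h) − γη⁻¹Δ_{h+1}⁽²⁾(s_{h+1})]
+ η⁻¹ KL(ν_h(·|s)‖ν̃_h(·|s))`; moreover
`KL(ν_h(·|s)‖ν̃_h(·|s)) = η Σ_b ν_h(b|s)(A_h^π(s,b) − Ã_h(s,b))` and
`V_h^π(s) − Ṽ_h(s) = Σ_b ν_h(b|s)(Q_h^π(s,b) − Q̃_h(s,b)) − η⁻¹ KL(ν_h(·|s)‖ν̃_h(·|s))`. -/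
theorem advantage_difference_decomposition
    {S A B : Type} [Fintype S] [Fintype A] [Fintype B]
    [Nonempty S] [Nonempty A] [Nonempty B]
    (H : ℕ) (hH : 1 ≤ H) (η γ : ℝ) (hη : 0 < η) (hγ0 : 0 ≤ γ) (hγ1 : γ ≤ 1)
    (P : ℕ → S → A → B → S → ℝ)
    (hP0 : ∀ h < H, ∀ s a b s', 0 ≤ P h s a b s')
    (hP1 : ∀ h < H, ∀ s a b, ∑ s', P h s a b s' = 1)
    (r : ℕ → S → A → B → ℝ) (hr : ∀ h < H, ∀ s a b, r h s a b ∈ Set.Icc (0 : ℝ) 1)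
    (pol : ℕ → S → B → A → ℝ)
    (hpol0 : ∀ h < H, ∀ s b a, 0 ≤ pol h s b a)
    (hpol1 : ∀ h < H, ∀ s b, ∑ a, pol h s b a = 1)
    (Qt : ℕ → S → B → ℝ) :
    ∀ h < H, ∀ (s : S),
      (∀ b : B,
        softA η γ H pol r P h s b - aTil η H Qt h s b =
          (delta1' η γ H pol r P Qt h s b -
              ∑ b', qr η γ H pol r P h s b' * delta1' η γ H pol r P Qt h s b') -
            γ * η⁻¹ *
              ((∑ a, pol h s b a * ∑ s', P h s a b s' *
                  delta2 η γ H pol r P Qt (h + 1) s') -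
                ∑ b'', qr η γ H pol r P h s b'' *
                  ∑ a, pol h s b'' a * ∑ s', P h s a b'' s' *
                    delta2 η γ H pol r P Qt (h + 1) s') +
            η⁻¹ * klQR η γ H pol r P Qt h s) ∧
      klQR η γ H pol r P Qt h s =
        η * ∑ b, qr η γ H pol r P h s b *
          (softA η γ H pol r P h s b - aTil η H Qt h s b) ∧
      softV η γ H pol r P h s - vTil η H Qt h s =
        (∑ b, qr η γ H pol r P h s b * (softQ η γ H pol r P h s b - Qt h s b)) -
          η⁻¹ * klQR η γ H pol r P Qt h s := by
  intro h hh s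
  have hkl := QSEAux.klQR_eq η γ H pol r P Qt h s
  have hVd := QSEAux.V_diff η γ H pol r P Qt hη hh s
  refine ⟨?_, hkl, hVd⟩
  intro b
  have hkey : ∀ b : B, delta1' η γ H pol r P Qt h s b =
      (softQ η γ H pol r P h s b - Qt h s b) +
        γ * η⁻¹ * ∑ a, pol h s b a * ∑ s', P h s a b s' *
          delta2 η γ H pol r P Qt (h + 1) s' :=
    fun b => QSEAux.key η γ H pol r P Qt hη (H - h) h le_rfl hh s b
  have h1 : softA η γ H pol r P h s b - aTil η H Qt h s b =
      (softQ η γ H pol r P h s b - Qt h s b) -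
        (softV η γ H pol r P h s - vTil η H Qt h s) := by
    unfold softA aTil; ring
  have h2 : (∑ b', qr η γ H pol r P h s b' * delta1' η γ H pol r P Qt h s b') =
      (∑ b', qr η γ H pol r P h s b' * (softQ η γ H pol r P h s b' - Qt h s b')) +
      γ * η⁻¹ * ∑ b', qr η γ H pol r P h s b' *
        ∑ a, pol h s b' a * ∑ s', P h s a b' s' *
          delta2 η γ H pol r P Qt (h + 1) s' := by
    have e : ∀ b' : B, qr η γ H pol r P h s b' * delta1' η γ H pol r P Qt h s b' =
        qr η γ H pol r P h s b' * (softQ η γ H pol r P h s b' - Qt h s b') +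
        γ * η⁻¹ * (qr η γ H pol r P h s b' *
          ∑ a, pol h s b' a * ∑ s', P h s a b' s' *
            delta2 η γ H pol r P Qt (h + 1) s') := by
      intro b'; rw [hkey b']; ring
    simp only [e, Finset.sum_add_distrib, ← Finset.mul_sum]
  rw [h1, hVd, hkey b, h2]
  ring
end
end

section
/- Variance–Hellinger bound for quantal responses. Let Q, Q̃ : B → ℝ with ν = ν_Q, ν̃ = ν_{Q̃}, and suppose B_A > 0 satisfies ‖A_Q‖_∞ ≤ B_A and ‖A_{Q̃}‖_∞ ≤ B_A. Then Var_ν[Q̃ − Q] ≤ 8·(η⁻¹ + B_A)²·D_H²(ν, ν̃). -/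
open Finset

noncomputable section

namespace QSE12

variable {B : Type*} [Fintype B]

/-- Soft value `V(Q) = η⁻¹ log Σ_b exp(η Q b)`. -/
def softVal (η : ℝ) (Q : B → ℝ) : ℝ := η⁻¹ * Real.log (∑ b, Real.exp (η * Q b))

/-- Advantage `A_Q(b) = Q b − V(Q)`. -/
def adv (η : ℝ) (Q : B → ℝ) (b : B) : ℝ := Q b - softVal η Q

/-- Quantal response `ν_Q(b) = exp(η A_Q(b))`. -/
def qres (η : ℝ) (Q : B → ℝ) (b : B) : ℝ := Real.exp (η * adv η Q b)

/-- Squared Hellinger distance between (densities of) distributions on `B`. -/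
def dH2 (p q : B → ℝ) : ℝ := (1 / 2) * ∑ b, (Real.sqrt (p b) - Real.sqrt (q b)) ^ 2

/-- Expectation `E_p[f] = Σ_b p(b) f(b)`. -/
def expec (p f : B → ℝ) : ℝ := ∑ b, p b * f b

/-- Variance `Var_p[f] = E_p[(f − E_p[f])²]`. -/
def varD (p f : B → ℝ) : ℝ := ∑ b, p b * (f b - expec p f) ^ 2

lemma key_log_ineq {u v M : ℝ} (hu : 0 < u) (hv : 0 < v)
    (hM : |Real.log u - Real.log v| ≤ M) :
    u * |Real.log u - Real.log v| ≤ (1 + M) * |u - v| := by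
  have hM0 : 0 ≤ M := le_trans (abs_nonneg _) hM
  rcases le_total u v with h | h
  · have hle : Real.log u ≤ Real.log v := Real.log_le_log hu h
    have h1 : Real.log v - Real.log u ≤ v / u - 1 := by
      have := Real.log_le_sub_one_of_pos (show 0 < v / u from div_pos hv hu)
      rwa [Real.log_div (ne_of_gt hv) (ne_of_gt hu)] at this
    have h2 : u * (v / u - 1) = v - u := by field_simp
    rw [abs_sub_comm, abs_of_nonneg (by linarith), abs_sub_comm, abs_of_nonneg (by linarith)]
    nlinarith
  · have hle : Real.log v ≤ Real.log u := Real.log_le_log hv h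
    have h1 : Real.log u - Real.log v ≤ u / v - 1 := by
      have := Real.log_le_sub_one_of_pos (show 0 < u / v from div_pos hu hv)
      rwa [Real.log_div (ne_of_gt hu) (ne_of_gt hv)] at this
    have h2 : v * (u / v - 1) = u - v := by field_simp
    rw [abs_of_nonneg (by linarith), abs_of_nonneg (by linarith)] at *
    have hMle : Real.log u - Real.log v ≤ M := hM
    nlinarith [mul_nonneg (sub_nonneg.2 h) (sub_nonneg.2 hle)]

lemma pointwise_bound (η : ℝ) (hη : 0 < η) (BA : ℝ) (hBA : 0 < BA)
    {a c : ℝ} (ha : |a| ≤ BA) (hc : |c| ≤ BA) :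
    Real.exp (η * a) * (c - a) ^ 2 ≤
      4 * (η⁻¹ + BA) ^ 2 * (Real.exp (η * a / 2) - Real.exp (η * c / 2)) ^ 2 := by
  set u := Real.exp (η * a / 2) with hu
  set v := Real.exp (η * c / 2) with hv
  have hup : 0 < u := Real.exp_pos _
  have hvp : 0 < v := Real.exp_pos _
  have hlogu : Real.log u = η * a / 2 := Real.log_exp _
  have hlogv : Real.log v = η * c / 2 := Real.log_exp _
  have hdiff : Real.log u - Real.log v = η * (a - c) / 2 := by rw [hlogu, hlogv]; ring
  have habsd : |Real.log u - Real.log v| = η / 2 * |a - c| := by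
    rw [hdiff, show η * (a - c) / 2 = η / 2 * (a - c) by ring, abs_mul,
      abs_of_pos (by positivity)]
  have hMb : |Real.log u - Real.log v| ≤ η * BA := by
    rw [habsd]
    have : |a - c| ≤ 2 * BA := by
      calc |a - c| ≤ |a| + |c| := abs_sub _ _
        _ ≤ 2 * BA := by linarith
    nlinarith
  have key := key_log_ineq hup hvp hMb
  -- key : u * |log u - log v| ≤ (1 + η*BA) * |u - v|
  have key2 : u * |a - c| ≤ 2 * (η⁻¹ + BA) * |u - v| := by
    rw [habsd] at key
    have hη2 : 2 * (η⁻¹ + BA) = (2 / η) * (1 + η * BA) := by field_simp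
    rw [hη2]
    have := mul_le_mul_of_nonneg_left key (le_of_lt (show (0:ℝ) < 2 / η by positivity))
    calc u * |a - c| = (2 / η) * (u * (η / 2 * |a - c|)) := by field_simp
      _ ≤ (2 / η) * ((1 + η * BA) * |u - v|) := this
      _ = 2 / η * (1 + η * BA) * |u - v| := by ring
  have hsq := mul_self_le_mul_self (by positivity) key2
  have huu : u * u = Real.exp (η * a) := by
    rw [hu, ← Real.exp_add]; ring_nf
  have e1 : |a - c| * |a - c| = (c - a) ^ 2 := by rw [abs_mul_abs_self]; ring
  have e2 : |u - v| * |u - v| = (u - v) ^ 2 := by rw [abs_mul_abs_self]; ring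
  calc Real.exp (η * a) * (c - a) ^ 2 = (u * |a - c|) * (u * |a - c|) := by
        rw [← huu, ← e1]; ring
    _ ≤ (2 * (η⁻¹ + BA) * |u - v|) * (2 * (η⁻¹ + BA) * |u - v|) := hsq
    _ = 4 * (η⁻¹ + BA) ^ 2 * (u - v) ^ 2 := by
        rw [← e2]; ring



lemma qres_sum_one [Nonempty B] (η : ℝ) (hη : 0 < η) (Q : B → ℝ) :
    ∑ b, qres η Q b = 1 := by
  have hS : 0 < ∑ b, Real.exp (η * Q b) :=
    Finset.sum_pos (fun b _ => Real.exp_pos _) Finset.univ_nonempty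
  have hlog : η * softVal η Q = Real.log (∑ b, Real.exp (η * Q b)) := by
    unfold softVal; field_simp
  have : ∀ b : B, qres η Q b = Real.exp (η * Q b) * (∑ b, Real.exp (η * Q b))⁻¹ := by
    intro b
    unfold qres adv
    rw [mul_sub, Real.exp_sub, hlog, Real.exp_log hS, div_eq_mul_inv]
  rw [Finset.sum_congr rfl (fun b _ => this b), ← Finset.sum_mul, mul_inv_cancel₀ (ne_of_gt hS)]

/-- Variance–Hellinger bound for quantal responses:
`Var_ν[Q̃ − Q] ≤ 8(η⁻¹ + B_A)² D_H²(ν, ν̃)` where `ν = ν_Q`, `ν̃ = ν_{Q̃}`. -/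
theorem variance_hellinger_bound_quantal
    {B : Type*} [Fintype B] [Nonempty B]
    (η : ℝ) (hη : 0 < η) (Q Qt : B → ℝ) (BA : ℝ) (hBA : 0 < BA)
    (hA : ∀ b, |adv η Q b| ≤ BA) (hAt : ∀ b, |adv η Qt b| ≤ BA) :
    varD (qres η Q) (fun b => Qt b - Q b) ≤
      8 * (η⁻¹ + BA) ^ 2 * dH2 (qres η Q) (qres η Qt) := by
  set ν : B → ℝ := qres η Q with hν
  set f : B → ℝ := fun b => adv η Qt b - adv η Q b with hf
  have hsum : ∑ b, ν b = 1 := qres_sum_one η hη Q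
  set m : ℝ := expec ν f with hm
  -- shift invariance: the centered deviations agree
  have hshift : ∀ b, (Qt b - Q b) - expec ν (fun b => Qt b - Q b) = f b - m := by
    have hE : expec ν (fun b => Qt b - Q b) = m + (softVal η Qt - softVal η Q) := by
      rw [hm]; unfold expec
      have : ∀ b : B, ν b * (Qt b - Q b) = ν b * f b + (softVal η Qt - softVal η Q) * ν b := by
        intro b; simp only [hf, adv]; ring
      rw [Finset.sum_congr rfl (fun b _ => this b), Finset.sum_add_distrib,
        ← Finset.mul_sum, hsum, mul_one]
    intro b
    rw [hE]; simp only [hf, adv]; ring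
  have hvar : varD ν (fun b => Qt b - Q b) = ∑ b, ν b * (f b - m) ^ 2 := by
    unfold varD
    exact Finset.sum_congr rfl (fun b _ => by rw [hshift b])
  -- variance ≤ second moment
  have hvar2 : ∑ b, ν b * (f b - m) ^ 2 ≤ ∑ b, ν b * f b ^ 2 := by
    have expand : ∑ b, ν b * (f b - m) ^ 2
        = (∑ b, ν b * f b ^ 2) - 2 * m * (∑ b, ν b * f b) + m ^ 2 * (∑ b, ν b) := by
      rw [Finset.mul_sum, Finset.mul_sum, ← Finset.sum_sub_distrib,
        ← Finset.sum_add_distrib]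
      exact Finset.sum_congr rfl (fun b _ => by ring)
    rw [expand, hsum, mul_one, show (∑ b, ν b * f b) = m from hm.symm]
    nlinarith [sq_nonneg m]
  -- pointwise bound and summation
  have hpt : ∀ b, ν b * f b ^ 2 ≤
      4 * (η⁻¹ + BA) ^ 2 * (Real.sqrt (ν b) - Real.sqrt (qres η Qt b)) ^ 2 := by
    intro b
    have hsq : ∀ x : ℝ, Real.sqrt (Real.exp x) = Real.exp (x / 2) := by
      intro x
      rw [show Real.exp x = Real.exp (x / 2) ^ 2 by
        rw [sq, ← Real.exp_add]; ring_nf]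
      exact Real.sqrt_sq (le_of_lt (Real.exp_pos _))
    have h1 : Real.sqrt (ν b) = Real.exp (η * adv η Q b / 2) := hsq _
    have h2 : Real.sqrt (qres η Qt b) = Real.exp (η * adv η Qt b / 2) := hsq _
    rw [h1, h2]
    have := pointwise_bound η hη BA hBA (hA b) (hAt b)
    simpa [hf, hν, qres] using this
  calc varD ν (fun b => Qt b - Q b) = ∑ b, ν b * (f b - m) ^ 2 := hvar
    _ ≤ ∑ b, ν b * f b ^ 2 := hvar2
    _ ≤ ∑ b, 4 * (η⁻¹ + BA) ^ 2 * (Real.sqrt (ν b) - Real.sqrt (qres η Qt b)) ^ 2 :=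
        Finset.sum_le_sum (fun b _ => hpt b)
    _ = 8 * (η⁻¹ + BA) ^ 2 * dH2 ν (qres η Qt) := by
        unfold dH2; rw [← Finset.mul_sum]; ring

end QSE12
end
end

section
/- KL–variance bound for quantal responses. Let Q, Q̃ : B → ℝ with ν = ν_Q, ν̃ = ν_{Q̃}, and suppose B_A > 0 satisfies ‖A_Q‖_∞ ≤ B_A and ‖A_{Q̃}‖_∞ ≤ B_A. Then KL(ν ‖ ν̃) ≤ (η²·exp(2ηB_A)/2)·Var_ν[Q̃ − Q]. -/
open Finset

noncomputable section

namespace QSE13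

variable {B : Type*} [Fintype B]

/-- Soft value `V(Q) = η⁻¹ log Σ_b exp(η Q b)`. -/
def softVal (η : ℝ) (Q : B → ℝ) : ℝ := η⁻¹ * Real.log (∑ b, Real.exp (η * Q b))

/-- Advantage `A_Q(b) = Q b − V(Q)`. -/
def adv (η : ℝ) (Q : B → ℝ) (b : B) : ℝ := Q b - softVal η Q

/-- Quantal response `ν_Q(b) = exp(η A_Q(b))`. -/
def qres (η : ℝ) (Q : B → ℝ) (b : B) : ℝ := Real.exp (η * adv η Q b)

/-- KL divergence `KL(p‖q) = Σ_b p(b) log(p(b)/q(b))`. -/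
def klD (p q : B → ℝ) : ℝ := ∑ b, p b * Real.log (p b / q b)

/-- Expectation `E_p[f] = Σ_b p(b) f(b)`. -/
def expec (p f : B → ℝ) : ℝ := ∑ b, p b * f b

/-- Variance `Var_p[f] = E_p[(f − E_p[f])²]`. -/
def varD (p f : B → ℝ) : ℝ := ∑ b, p b * (f b - expec p f) ^ 2

/-!
With `X = Q̃ - Q`, the log-ratio of the two quantal responses is affine in `X`, so
`KL(ν ‖ ν̃) = η (V(Q̃) - V(Q)) - η E_ν[X]`, while `exp (η (V(Q̃) - V(Q))) = E_ν[exp (η X)]`.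
Hence the divergence is the centred cumulant generating function of `η X`, which `log x ≤ x - 1`
bounds by `E_ν[φ (η (X - E_ν X))]` with `φ y = exp y - 1 - y`. Advantages lie in `[-B_A, 0]`, so
`X` oscillates by at most `2 B_A`, whence `|X - E_ν X| ≤ 2 B_A`, and `φ y ≤ y² / 2 · exp |y|`
turns this into the variance bound.
-/

open Real

lemma exp_sub_one_sub_le_of_nonpos {y : ℝ} (hy : y ≤ 0) : exp y - 1 - y ≤ y ^ 2 / 2 := by
  -- `exp (-y) ≥ q := 1 - y + y²/2`, and `(1 + y + y²/2) * q = 1 + y⁴/4 ≥ 1 = exp y * exp (-y)`.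
  have hq := quadratic_le_exp_of_nonneg (neg_nonneg.mpr hy)
  have hprod : exp y * exp (-y) = 1 := by rw [← exp_add, add_neg_cancel, exp_zero]
  have hqpos : 0 < 1 - y + y ^ 2 / 2 := by nlinarith
  nlinarith [mul_le_mul_of_nonneg_left hq (exp_pos y).le, sq_nonneg (y ^ 2), exp_pos y]

lemma exp_sub_one_sub_le_of_nonneg {y : ℝ} (hy : 0 ≤ y) :
    exp y - 1 - y ≤ y ^ 2 / 2 * exp y := by
  have hmono : MonotoneOn (fun x => (x ^ 2 / 2 - 1) * exp x + 1 + x) (Set.Ici 0) := by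
    refine monotoneOn_of_hasDerivWithinAt_nonneg (convex_Ici 0) (by fun_prop)
      (f' := fun x => x ^ 2 / 2 * exp x + (1 - (1 - x) * exp x)) (fun x _ => ?_) (fun x _ => ?_)
    · exact ((((hasDerivAt_pow 2 x).div_const 2).sub_const 1).fun_mul (hasDerivAt_exp x)).add_const 1
        |>.fun_add (hasDerivAt_id' x) |>.congr_deriv (by norm_num; ring) |>.hasDerivWithinAt
    · have h := mul_le_mul_of_nonneg_left (one_sub_le_exp_neg x) (exp_pos x).le
      rw [← exp_add, add_neg_cancel, exp_zero, mul_comm] at h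
      have : 0 ≤ x ^ 2 / 2 * exp x := by positivity
      linarith
  have := hmono (Set.mem_Ici.mpr le_rfl) (Set.mem_Ici.mpr hy) hy
  simp only [exp_zero] at this
  linarith

lemma exp_sub_one_sub_le_of_abs_le {y M : ℝ} (h : |y| ≤ M) :
    exp y - 1 - y ≤ y ^ 2 / 2 * exp M := by
  rcases le_total y 0 with hy | hy
  · have : 1 ≤ exp M := one_le_exp ((abs_nonneg y).trans h)
    nlinarith [exp_sub_one_sub_le_of_nonpos hy, sq_nonneg y]
  · rw [abs_of_nonneg hy] at h
    exact (exp_sub_one_sub_le_of_nonneg hy).trans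
      (mul_le_mul_of_nonneg_left (exp_le_exp.mpr h) (by positivity))

section Expectation

variable {p : B → ℝ}

lemma expec_const (hp : ∑ b, p b = 1) (c : ℝ) : expec p (fun _ => c) = c := by
  rw [expec, ← Finset.sum_mul, hp, one_mul]

lemma expec_sub (f g : B → ℝ) : expec p (fun b => f b - g b) = expec p f - expec p g := by
  simp only [expec, mul_sub, Finset.sum_sub_distrib]

lemma expec_const_mul (c : ℝ) (f : B → ℝ) : expec p (fun b => c * f b) = c * expec p f := by
  simp only [expec, Finset.mul_sum, mul_left_comm]

lemma expec_le_expec (hp : ∀ b, 0 ≤ p b) {f g : B → ℝ} (h : ∀ b, f b ≤ g b) :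
    expec p f ≤ expec p g :=
  Finset.sum_le_sum fun b _ => mul_le_mul_of_nonneg_left (h b) (hp b)

lemma expec_sub_expec_eq_zero (hp : ∑ b, p b = 1) (f : B → ℝ) :
    expec p (fun b => f b - expec p f) = 0 := by
  rw [expec_sub, expec_const hp, sub_self]

lemma abs_sub_expec_le (hp0 : ∀ b, 0 ≤ p b) (hp1 : ∑ b, p b = 1) {f : B → ℝ} {c : ℝ}
    (h : ∀ b b', f b - f b' ≤ c) (b : B) : |f b - expec p f| ≤ c := by
  have above := expec_le_expec hp0 (fun b' => h b b')
  have below := expec_le_expec hp0 (fun b' => h b' b)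
  rw [expec_sub, expec_const hp1, expec_const hp1] at above below
  exact abs_le.mpr ⟨by linarith, by linarith⟩

/-- Here `c = log E_p[exp f]`; the bound is `log x ≤ x - 1` at `x = E_p[exp (f - E_p f)]`. -/
lemma sub_expec_le_expec_exp_sub_one_sub (hp : ∑ b, p b = 1) {f : B → ℝ} {c : ℝ}
    (hc : exp c = expec p (fun b => exp (f b))) :
    c - expec p f ≤ expec p (fun b => exp (f b - expec p f) - 1 - (f b - expec p f)) := by
  have hcentered : exp (c - expec p f) = expec p (fun b => exp (f b - expec p f)) := by
    rw [exp_sub, hc]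
    simp only [expec, exp_sub, Finset.sum_div, mul_div_assoc]
  rw [expec_sub, expec_sub, expec_const hp, expec_sub_expec_eq_zero hp, ← hcentered]
  linarith [add_one_le_exp (c - expec p f)]

end Expectation

section Quantal

variable [Nonempty B] {η : ℝ}

lemma exp_mul_softVal (hη : 0 < η) (Q : B → ℝ) :
    exp (η * softVal η Q) = ∑ b, exp (η * Q b) := by
  have hS : 0 < ∑ b, exp (η * Q b) := Finset.sum_pos (fun b _ => exp_pos _) univ_nonempty
  rw [softVal, ← mul_assoc, mul_inv_cancel₀ hη.ne', one_mul, exp_log hS]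

lemma qres_eq_exp_div_sum (hη : 0 < η) (Q : B → ℝ) (b : B) :
    qres η Q b = exp (η * Q b) / ∑ b', exp (η * Q b') := by
  rw [qres, adv, mul_sub, exp_sub, exp_mul_softVal hη]

lemma sum_qres (hη : 0 < η) (Q : B → ℝ) : ∑ b, qres η Q b = 1 := by
  simp only [qres_eq_exp_div_sum hη]
  rw [← Finset.sum_div, div_self (Finset.sum_pos (fun b _ => exp_pos _) univ_nonempty).ne']

lemma adv_nonpos (hη : 0 < η) (Q : B → ℝ) (b : B) : adv η Q b ≤ 0 := by
  have h : exp (η * Q b) ≤ exp (η * softVal η Q) := by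
    rw [exp_mul_softVal hη]
    exact Finset.single_le_sum (f := fun b => exp (η * Q b)) (fun b _ => (exp_pos _).le)
      (Finset.mem_univ b)
  rw [adv, sub_nonpos]
  exact le_of_mul_le_mul_left (exp_le_exp.mp h) hη

lemma klD_qres (hη : 0 < η) (Q Qt : B → ℝ) :
    klD (qres η Q) (qres η Qt) =
      η * (softVal η Qt - softVal η Q) - expec (qres η Q) (fun b => η * (Qt b - Q b)) := by
  have hlog : ∀ b, log (qres η Q b / qres η Qt b) =
      η * (softVal η Qt - softVal η Q) - η * (Qt b - Q b) := fun b => by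
    rw [qres, qres, ← exp_sub, log_exp, adv, adv]
    ring
  simp only [klD, hlog]
  exact (expec_sub _ _).trans (by rw [expec_const (sum_qres hη Q)])

lemma exp_mul_softVal_sub (hη : 0 < η) (Q Qt : B → ℝ) :
    exp (η * (softVal η Qt - softVal η Q)) =
      expec (qres η Q) (fun b => exp (η * (Qt b - Q b))) := by
  rw [mul_sub, exp_sub, exp_mul_softVal hη, exp_mul_softVal hη, expec, Finset.sum_div]
  refine Finset.sum_congr rfl fun b _ => ?_
  rw [qres_eq_exp_div_sum hη, mul_sub, exp_sub]
  field_simp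

lemma sub_le_of_forall_abs_adv_le (hη : 0 < η) {Q : B → ℝ} {BA : ℝ}
    (hA : ∀ b, |adv η Q b| ≤ BA) (b b' : B) : Q b - Q b' ≤ BA := by
  have h := adv_nonpos hη Q b
  have h' := (abs_le.mp (hA b')).1
  simp only [adv] at h h'
  linarith

end Quantal

theorem kl_variance_bound_quantal_general
    {B : Type*} [Fintype B] [Nonempty B]
    (η : ℝ) (hη : 0 < η) (Q Qt : B → ℝ) (BA : ℝ)
    (hA : ∀ b, |adv η Q b| ≤ BA) (hAt : ∀ b, |adv η Qt b| ≤ BA) :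
    klD (qres η Q) (qres η Qt) ≤
      η ^ 2 * Real.exp (2 * η * BA) / 2 * varD (qres η Q) (fun b => Qt b - Q b) := by
  set ν := qres η Q
  set X := fun b => Qt b - Q b
  have hν0 : ∀ b, 0 ≤ ν b := fun b => (exp_pos _).le
  have hν1 : ∑ b, ν b = 1 := sum_qres hη Q
  have hosc : ∀ b b', X b - X b' ≤ 2 * BA := fun b b' => by
    linarith [sub_le_of_forall_abs_adv_le hη hAt b b', sub_le_of_forall_abs_adv_le hη hA b' b]
  set μ := expec ν X
  have hdev : ∀ b, |η * (X b - μ)| ≤ 2 * η * BA := fun b => by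
    rw [abs_mul, abs_of_pos hη, mul_comm 2 η, mul_assoc]
    exact mul_le_mul_of_nonneg_left (abs_sub_expec_le hν0 hν1 hosc b) hη.le
  calc klD ν (qres η Qt)
      = η * (softVal η Qt - softVal η Q) - expec ν (fun b => η * X b) := klD_qres hη Q Qt
    _ ≤ expec ν (fun b => exp (η * X b - expec ν (fun b => η * X b)) - 1
          - (η * X b - expec ν (fun b => η * X b))) :=
        sub_expec_le_expec_exp_sub_one_sub hν1 (exp_mul_softVal_sub hη Q Qt)
    _ = expec ν (fun b => exp (η * (X b - μ)) - 1 - η * (X b - μ)) := by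
        simp only [expec_const_mul, mul_sub]
        rfl
    _ ≤ expec ν (fun b => η ^ 2 * exp (2 * η * BA) / 2 * (X b - μ) ^ 2) :=
        expec_le_expec hν0 fun b => (exp_sub_one_sub_le_of_abs_le (hdev b)).trans_eq (by ring)
    _ = η ^ 2 * exp (2 * η * BA) / 2 * varD ν X := expec_const_mul _ _

/-- KL–variance bound for quantal responses:
`KL(ν ‖ ν̃) ≤ (η² exp(2ηB_A)/2)·Var_ν[Q̃ − Q]` where `ν = ν_Q`, `ν̃ = ν_{Q̃}`. -/
theorem kl_variance_bound_quantal
    {B : Type*} [Fintype B] [Nonempty B]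
    (η : ℝ) (hη : 0 < η) (Q Qt : B → ℝ) (BA : ℝ) (hBA : 0 < BA)
    (hA : ∀ b, |adv η Q b| ≤ BA) (hAt : ∀ b, |adv η Qt b| ≤ BA) :
    klD (qres η Q) (qres η Qt) ≤
      η ^ 2 * Real.exp (2 * η * BA) / 2 * varD (qres η Q) (fun b => Qt b - Q b) :=
  kl_variance_bound_quantal_general η hη Q Qt BA hA hAt

end QSE13
end
end

section
/- Identification of the follower's reward from a linear constraint. Let r, r̃ : B → ℝ, let ν be a strictly positive probability distribution on B, and let x : B → ℝ with ⟨x, 𝟙⟩ ≠ 0. Suppose ε ≥ 0 is such that inf_{ξ∈ℝ} ⟨ν, |r − r̃ − ξ·𝟙|⟩ ≤ ε (the infimum over constants ξ, which is attained since B is finite) and that ⟨x, r − r̃⟩ = 0. Then ⟨ν, |r − r̃|⟩ ≤ (1 + ‖x/ν‖_∞ / |⟨x, 𝟙⟩|)·ε, where (x/ν)(b) = x(b)/ν(b). -/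
open Finset

noncomputable section

/-- Identification of the follower's reward from a linear constraint: if the infimum over
constant shifts `ξ` of `⟨ν, |r − r̃ − ξ𝟙|⟩` is at most `ε` and `⟨x, r − r̃⟩ = 0`, then
`⟨ν, |r − r̃|⟩ ≤ (1 + ‖x/ν‖_∞/|⟨x,𝟙⟩|)·ε`. -/
theorem reward_identification
    {B : Type*} [Fintype B] [Nonempty B]
    (r rt ν x : B → ℝ)
    (hν0 : ∀ b, 0 < ν b) (hν1 : ∑ b, ν b = 1)
    (hx : ∑ b, x b ≠ 0) (ε : ℝ) (hε : 0 ≤ ε)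
    (hinf : (⨅ ξ : ℝ, ∑ b, ν b * |r b - rt b - ξ|) ≤ ε)
    (hlin : ∑ b, x b * (r b - rt b) = 0) :
    ∑ b, ν b * |r b - rt b| ≤
      (1 + (Finset.univ.sup' Finset.univ_nonempty fun b => |x b / ν b|) / |∑ b, x b|) * ε := by
  set d : B → ℝ := fun b => r b - rt b with hd
  set M : ℝ := Finset.univ.sup' Finset.univ_nonempty fun b => |x b / ν b| with hM
  set A : ℝ := |∑ b, x b| with hA
  have hA0 : 0 < A := abs_pos.mpr hx
  have hM0 : 0 ≤ M := by
    obtain ⟨b⟩ := ‹Nonempty B›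
    exact le_trans (abs_nonneg (x b / ν b))
      (Finset.le_sup' (fun b => |x b / ν b|) (Finset.mem_univ b))
  have hc0 : (0:ℝ) < 1 + M / A := by positivity
  -- key estimate for every ξ
  have key : ∀ ξ : ℝ, ∑ b, ν b * |d b| ≤ (1 + M / A) * ∑ b, ν b * |d b - ξ| := by
    intro ξ
    set S : ℝ := ∑ b, ν b * |d b - ξ| with hS
    have hS0 : 0 ≤ S :=
      Finset.sum_nonneg fun b _ => mul_nonneg (hν0 b).le (abs_nonneg _)
    have h1 : ∑ b, ν b * |d b| ≤ S + |ξ| := by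
      have : ∑ b, ν b * |d b| ≤ ∑ b, (ν b * |d b - ξ| + ν b * |ξ|) := by
        refine Finset.sum_le_sum fun b _ => ?_
        have : |d b| ≤ |d b - ξ| + |ξ| := by
          calc |d b| = |(d b - ξ) + ξ| := by ring_nf
          _ ≤ |d b - ξ| + |ξ| := abs_add_le _ _
        nlinarith [(hν0 b).le]
      calc ∑ b, ν b * |d b| ≤ ∑ b, (ν b * |d b - ξ| + ν b * |ξ|) := this
        _ = S + (∑ b, ν b) * |ξ| := by rw [Finset.sum_add_distrib, ← Finset.sum_mul]
        _ = S + |ξ| := by rw [hν1, one_mul]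
    have h2 : |ξ| * A ≤ M * S := by
      have hξA : |ξ| * A = |∑ b, x b * (ξ - d b)| := by
        have : ∑ b, x b * (ξ - d b) = ξ * ∑ b, x b := by
          have e1 : ∑ b, x b * (ξ - d b) = ξ * ∑ b, x b - ∑ b, x b * d b := by
            rw [Finset.mul_sum, ← Finset.sum_sub_distrib]
            exact Finset.sum_congr rfl fun b _ => by ring
          rw [e1, hlin, sub_zero]
        rw [this, abs_mul, hA, mul_comm]
      rw [hξA]
      calc |∑ b, x b * (ξ - d b)| ≤ ∑ b, |x b * (ξ - d b)| := Finset.abs_sum_le_sum_abs _ _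
        _ ≤ ∑ b, M * (ν b * |d b - ξ|) := by
            refine Finset.sum_le_sum fun b _ => ?_
            have hb : |x b| = |x b / ν b| * ν b := by
              rw [abs_div, abs_of_pos (hν0 b), div_mul_cancel₀ _ (hν0 b).ne']
            have hMb : |x b / ν b| ≤ M :=
              Finset.le_sup' (fun b => |x b / ν b|) (Finset.mem_univ b)
            rw [abs_mul, hb, abs_sub_comm]
            calc |x b / ν b| * ν b * |d b - ξ|
                = |x b / ν b| * (ν b * |d b - ξ|) := by ring
              _ ≤ M * (ν b * |d b - ξ|) :=
                  mul_le_mul_of_nonneg_right hMb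
                    (mul_nonneg (hν0 b).le (abs_nonneg _))
        _ = M * S := by rw [← Finset.mul_sum]
    have hξ : |ξ| ≤ M / A * S := by
      rw [div_mul_eq_mul_div, le_div_iff₀ hA0]
      nlinarith
    calc ∑ b, ν b * |d b| ≤ S + |ξ| := h1
      _ ≤ S + M / A * S := by linarith
      _ = (1 + M / A) * S := by ring
  -- conclude via the infimum
  have hle : ∑ b, ν b * |d b| ≤ (1 + M / A) * ⨅ ξ : ℝ, ∑ b, ν b * |d b - ξ| := by
    have h3 : (∑ b, ν b * |d b|) / (1 + M / A) ≤ ⨅ ξ : ℝ, ∑ b, ν b * |d b - ξ| :=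
      le_ciInf fun ξ => (div_le_iff₀ hc0).mpr (by rw [mul_comm]; exact key ξ)
    have := mul_le_mul_of_nonneg_left h3 hc0.le
    rwa [mul_div_cancel₀ _ hc0.ne'] at this
  calc ∑ b, ν b * |d b| ≤ (1 + M / A) * ⨅ ξ : ℝ, ∑ b, ν b * |d b - ξ| := hle
    _ ≤ (1 + M / A) * ε := by
        exact mul_le_mul_of_nonneg_left hinf hc0.le
end
end

section
/- Stability of value functions and quantal responses under model and policy perturbations. Let M = (u, r, P) and M̃ = (ũ, r̃, P̃) be two episodic leader–follower Markov games on the same (S, A, B, H, η, γ) with all rewards taking values in [0,1], and let π, π̃ be two leader policies. Suppose ε > 0 satisfies, for all h ∈ [H] and all (s,a,b): ‖u_h − ũ_h‖_∞ ≤ ε, ‖r_h − r̃_h‖_∞ ≤ ε, ‖P_h(·|s,a,b) − P̃_h(·|s,a,b)‖₁ ≤ ε, and ‖π_h(·|s,b) − π̃_h(·|s,b)‖₁ ≤ ε. Let (Q_h, V_h, ν_h, U_h, W_h) denote the follower's soft value functions, quantal response, and leader's value functions of π under M, and (Q̃_h, Ṽ_h, ν̃_h, Ũ_h, W̃_h)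 the corresponding objects of π̃ under M̃, and set B_A = (1 + eff_H(γ))·(η⁻¹·log|B| + 1). Then for all h ∈ [H] and s ∈ S: (i) ‖Q_h − Q̃_h‖_∞ ≤ 2ε·(1 + γB_A)·eff_H(γ); (ii) ‖V_h − Ṽ_h‖_∞ ≤ 2ε·(1 + γB_A)·eff_H(γ); (iii) D_H²(ν_h(·|s), ν̃_h(·|s)) ≤ ‖(ν_h − ν̃_h)(·|s)‖₁ ≤ 8ηε·(1 + γB_A)·eff_H(γ); (iv) ‖U_h − Ũ_h‖_∞ ≤ ε·H·(8ηH·(1 + γB_A)·eff_H(γ) + 1 + 2H); (v) ‖W_h − W̃_h‖_∞ ≤ ε·(H+1)·(8ηH·(1 + γB_A)·eff_H(γ) + 1 + 2H). -/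
open Finset

noncomputable section

namespace QSE

/-- Fuel-indexed leader state value under `(π, ν)`: `wAux n = W_{H−n}` (with `W_H ≡ 0`). -/
def wAux [Fintype S] [Fintype A] [Fintype B] (H : ℕ)
    (pol : ℕ → S → B → A → ℝ) (nu : ℕ → S → B → ℝ)
    (P : ℕ → S → A → B → S → ℝ) (u : ℕ → S → A → B → ℝ) : ℕ → S → ℝ
  | 0, _ => 0
  | n + 1, s => ∑ b, nu (H - (n + 1)) s b * ∑ a, pol (H - (n + 1)) s b a *
      (u (H - (n + 1)) s a b +
        ∑ s', P (H - (n + 1)) s a b s' * wAux H pol nu P u n s')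

/-- Leader state value `W_h^π` (0-based step `h`, `W_H ≡ 0`), where `ν` is the
follower's quantal response. -/
def leadW [Fintype S] [Fintype A] [Fintype B] (η γ : ℝ) (H : ℕ)
    (pol : ℕ → S → B → A → ℝ) (r : ℕ → S → A → B → ℝ)
    (P : ℕ → S → A → B → S → ℝ) (u : ℕ → S → A → B → ℝ) (h : ℕ) (s : S) : ℝ :=
  wAux H pol (qr η γ H pol r P) P u (H - h) s

/-- Leader action value `U_h^π(s,a,b) = u_h(s,a,b) + Σ_{s'} P_h(s'|s,a,b) W_{h+1}^π(s')`. -/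
def leadU [Fintype S] [Fintype A] [Fintype B] (η γ : ℝ) (H : ℕ)
    (pol : ℕ → S → B → A → ℝ) (r : ℕ → S → A → B → ℝ)
    (P : ℕ → S → A → B → S → ℝ) (u : ℕ → S → A → B → ℝ)
    (h : ℕ) (s : S) (a : A) (b : B) : ℝ :=
  u h s a b + ∑ s', P h s a b s' * leadW η γ H pol r P u (h + 1) s'

end QSE


lemma sum_abs_le' {ι : Type*} (t : Finset ι) (f g : ι → ℝ) (h : ∀ i ∈ t, |f i| ≤ g i) :
    |∑ i ∈ t, f i| ≤ ∑ i ∈ t, g i :=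
  (Finset.abs_sum_le_sum_abs _ _).trans (Finset.sum_le_sum h)

lemma weighted_diff {ι : Type*} (t : Finset ι) (p q f g : ι → ℝ) (e C D : ℝ)
    (hC : 0 ≤ C) (hD : 0 ≤ D)
    (hf : ∀ i ∈ t, |f i| ≤ C) (hfg : ∀ i ∈ t, |f i - g i| ≤ D)
    (hq0 : ∀ i ∈ t, 0 ≤ q i) (hq1 : ∑ i ∈ t, q i ≤ 1)
    (hpq : ∑ i ∈ t, |p i - q i| ≤ e) :
    |∑ i ∈ t, p i * f i - ∑ i ∈ t, q i * g i| ≤ e * C + D := by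
  have key : ∀ i ∈ t, |p i * f i - q i * g i| ≤ |p i - q i| * C + q i * D := by
    intro i hi
    have h0 : p i * f i - q i * g i = (p i - q i) * f i + q i * (f i - g i) := by ring
    rw [h0]
    refine (abs_add_le _ _).trans (add_le_add ?_ ?_)
    · rw [abs_mul]; exact mul_le_mul_of_nonneg_left (hf i hi) (abs_nonneg _)
    · rw [abs_mul, abs_of_nonneg (hq0 i hi)]
      exact mul_le_mul_of_nonneg_left (hfg i hi) (hq0 i hi)
  calc |∑ i ∈ t, p i * f i - ∑ i ∈ t, q i * g i|
      = |∑ i ∈ t, (p i * f i - q i * g i)| := by rw [Finset.sum_sub_distrib]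
    _ ≤ ∑ i ∈ t, (|p i - q i| * C + q i * D) := sum_abs_le' _ _ _ key
    _ = (∑ i ∈ t, |p i - q i|) * C + (∑ i ∈ t, q i) * D := by
        rw [Finset.sum_add_distrib, Finset.sum_mul, Finset.sum_mul]
    _ ≤ e * C + 1 * D := add_le_add (mul_le_mul_of_nonneg_right hpq hC)
        (mul_le_mul_of_nonneg_right hq1 hD)
    _ = e * C + D := by ring

lemma logsum_le_of_le {ι : Type*} [Fintype ι] [Nonempty ι] {η δ : ℝ} (hη : 0 < η)
    {x y : ι → ℝ} (hxy : ∀ i, x i ≤ y i + δ) :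
    η⁻¹ * Real.log (∑ i, Real.exp (η * x i)) ≤
      η⁻¹ * Real.log (∑ i, Real.exp (η * y i)) + δ := by
  have hpos : (0:ℝ) < ∑ i, Real.exp (η * y i) :=
    Finset.sum_pos (fun i _ => Real.exp_pos _) univ_nonempty
  have h1 : ∑ i, Real.exp (η * x i) ≤ (∑ i, Real.exp (η * y i)) * Real.exp (η * δ) := by
    rw [Finset.sum_mul]
    refine Finset.sum_le_sum fun i _ => ?_
    rw [← Real.exp_add]
    exact Real.exp_le_exp.mpr (by nlinarith [hxy i])
  have h2 : Real.log (∑ i, Real.exp (η * x i)) ≤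
      Real.log (∑ i, Real.exp (η * y i)) + η * δ := by
    have := Real.log_le_log (Finset.sum_pos (fun i _ => Real.exp_pos _) univ_nonempty) h1
    rwa [Real.log_mul (ne_of_gt hpos) (Real.exp_ne_zero _), Real.log_exp] at this
  have h3 := mul_le_mul_of_nonneg_left h2 (le_of_lt (inv_pos.mpr hη))
  rw [mul_add, ← mul_assoc, inv_mul_cancel₀ (ne_of_gt hη), one_mul] at h3
  exact h3

lemma logsum_lip {ι : Type*} [Fintype ι] [Nonempty ι] {η δ : ℝ} (hη : 0 < η)
    {x y : ι → ℝ} (hxy : ∀ i, |x i - y i| ≤ δ) :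
    |η⁻¹ * Real.log (∑ i, Real.exp (η * x i)) -
      η⁻¹ * Real.log (∑ i, Real.exp (η * y i))| ≤ δ := by
  rw [abs_sub_le_iff]
  constructor
  · have := logsum_le_of_le (δ := δ) hη (x := x) (y := y)
      (fun i => by have := hxy i; rw [abs_le] at this; linarith [this.1, this.2])
    linarith
  · have := logsum_le_of_le (δ := δ) hη (x := y) (y := x)
      (fun i => by have := hxy i; rw [abs_le] at this; linarith [this.1, this.2])
    linarith

lemma logsum_nonneg {ι : Type*} [Fintype ι] [Nonempty ι] {η : ℝ} (hη : 0 < η)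
    {x : ι → ℝ} (hx : ∀ i, 0 ≤ x i) :
    0 ≤ η⁻¹ * Real.log (∑ i, Real.exp (η * x i)) := by
  have h1 : (1:ℝ) ≤ ∑ i, Real.exp (η * x i) := by
    have hcard : (1:ℝ) ≤ (Fintype.card ι : ℝ) := by
      exact_mod_cast Fintype.card_pos
    calc (1:ℝ) ≤ (Fintype.card ι : ℝ) := hcard
      _ = ∑ _i : ι, (1:ℝ) := by simp
      _ ≤ ∑ i, Real.exp (η * x i) := Finset.sum_le_sum fun i _ => by
          rw [show (1:ℝ) = Real.exp 0 by simp]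
          exact Real.exp_le_exp.mpr (by nlinarith [hx i])
  exact mul_nonneg (le_of_lt (inv_pos.mpr hη)) (Real.log_nonneg h1)

lemma logsum_le_bound {ι : Type*} [Fintype ι] [Nonempty ι] {η M : ℝ} (hη : 0 < η)
    {x : ι → ℝ} (hx : ∀ i, x i ≤ M) :
    η⁻¹ * Real.log (∑ i, Real.exp (η * x i)) ≤
      η⁻¹ * Real.log (Fintype.card ι) + M := by
  have := logsum_le_of_le (δ := M) hη (x := x) (y := fun _ => 0)
    (fun i => by simpa using hx i)
  simpa using this

lemma softmax_pdf {ι : Type*} [Fintype ι] [Nonempty ι] {η : ℝ} (hη : 0 < η) (x : ι → ℝ) (i : ι) :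
    Real.exp (η * (x i - η⁻¹ * Real.log (∑ j, Real.exp (η * x j))))
      = Real.exp (η * x i) / (∑ j, Real.exp (η * x j)) := by
  have hZ : (0:ℝ) < ∑ j, Real.exp (η * x j) :=
    Finset.sum_pos (fun j _ => Real.exp_pos _) univ_nonempty
  rw [mul_sub, ← mul_assoc, mul_inv_cancel₀ (ne_of_gt hη), one_mul, Real.exp_sub,
    Real.exp_log hZ]

lemma softmax_sum_one {ι : Type*} [Fintype ι] [Nonempty ι] {η : ℝ} (hη : 0 < η) (x : ι → ℝ) :
    ∑ i, Real.exp (η * (x i - η⁻¹ * Real.log (∑ j, Real.exp (η * x j)))) = 1 := by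
  have hZ : (0:ℝ) < ∑ j, Real.exp (η * x j) :=
    Finset.sum_pos (fun j _ => Real.exp_pos _) univ_nonempty
  simp only [softmax_pdf hη]
  rw [← Finset.sum_div, div_self (ne_of_gt hZ)]

lemma abs_sub_le_of_ratio {p q K : ℝ} (hp : 0 ≤ p) (hq : 0 ≤ q) (hK : 1 ≤ K)
    (h1 : p ≤ K * q) (h2 : q ≤ K * p) : |p - q| ≤ (p + q) * (1 - K⁻¹) := by
  have hK0 : (0:ℝ) < K := lt_of_lt_of_le one_pos hK
  have hKi : K⁻¹ * K = 1 := inv_mul_cancel₀ (ne_of_gt hK0)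
  have hKi0 : 0 ≤ K⁻¹ := le_of_lt (inv_pos.mpr hK0)
  have hKi1 : K⁻¹ ≤ 1 := by
    rw [← hKi]; nlinarith
  rcases le_total p q with h | h
  · rw [abs_of_nonpos (by linarith)]
    have : p ≥ K⁻¹ * q := by nlinarith
    nlinarith
  · rw [abs_of_nonneg (by linarith)]
    have : q ≥ K⁻¹ * p := by nlinarith
    nlinarith

lemma softmax_l1 {ι : Type*} [Fintype ι] [Nonempty ι] {η δ : ℝ} (hη : 0 < η) (hδ : 0 ≤ δ)
    (x y : ι → ℝ) (hxy : ∀ i, |x i - y i| ≤ δ) :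
    ∑ i, |Real.exp (η * (x i - η⁻¹ * Real.log (∑ j, Real.exp (η * x j)))) -
          Real.exp (η * (y i - η⁻¹ * Real.log (∑ j, Real.exp (η * y j))))| ≤ 4 * η * δ := by
  have hZx : (0:ℝ) < ∑ j, Real.exp (η * x j) :=
    Finset.sum_pos (fun j _ => Real.exp_pos _) univ_nonempty
  have hZy : (0:ℝ) < ∑ j, Real.exp (η * y j) :=
    Finset.sum_pos (fun j _ => Real.exp_pos _) univ_nonempty
  set p : ι → ℝ := fun i => Real.exp (η * x i) / (∑ j, Real.exp (η * x j)) with hpdef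
  set q : ι → ℝ := fun i => Real.exp (η * y i) / (∑ j, Real.exp (η * y j)) with hqdef
  have hp0 : ∀ i, 0 ≤ p i := fun i => div_nonneg (Real.exp_pos _).le hZx.le
  have hq0 : ∀ i, 0 ≤ q i := fun i => div_nonneg (Real.exp_pos _).le hZy.le
  have hps : ∑ i, p i = 1 := by rw [hpdef, ← Finset.sum_div, div_self (ne_of_gt hZx)]
  have hqs : ∑ i, q i = 1 := by rw [hqdef, ← Finset.sum_div, div_self (ne_of_gt hZy)]
  set K : ℝ := Real.exp (2 * η * δ) with hKdef
  have hK1 : 1 ≤ K := Real.one_le_exp (by positivity)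
  have hKsq : K = Real.exp (η * δ) * Real.exp (η * δ) := by
    rw [hKdef, ← Real.exp_add]; ring_nf
  have hcross : ∀ (u v : ι → ℝ), (0:ℝ) < ∑ j, Real.exp (η * u j) →
      (0:ℝ) < ∑ j, Real.exp (η * v j) → (∀ i, |u i - v i| ≤ δ) → ∀ i,
      Real.exp (η * u i) / (∑ j, Real.exp (η * u j)) ≤
        K * (Real.exp (η * v i) / (∑ j, Real.exp (η * v j))) := by
    intro u v hZu hZv huv i
    rw [mul_div_assoc'] at *
    rw [div_le_div_iff₀ hZu hZv]
    have e1 : Real.exp (η * u i) ≤ Real.exp (η * δ) * Real.exp (η * v i) := by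
      rw [← Real.exp_add]
      refine Real.exp_le_exp.mpr ?_
      have := (abs_le.mp (huv i)).2
      nlinarith
    have e2 : ∑ j, Real.exp (η * v j) ≤ Real.exp (η * δ) * ∑ j, Real.exp (η * u j) := by
      rw [Finset.mul_sum]
      refine Finset.sum_le_sum fun j _ => ?_
      rw [← Real.exp_add]
      refine Real.exp_le_exp.mpr ?_
      have := (abs_le.mp (huv j)).1
      nlinarith
    calc Real.exp (η * u i) * ∑ j, Real.exp (η * v j)
        ≤ (Real.exp (η * δ) * Real.exp (η * v i)) * (Real.exp (η * δ) * ∑ j, Real.exp (η * u j)) := by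
          exact mul_le_mul e1 e2 (Finset.sum_pos (fun j _ => Real.exp_pos _) univ_nonempty).le (by positivity)
      _ = K * Real.exp (η * v i) * ∑ j, Real.exp (η * u j) := by rw [hKsq]; ring
  have hpoint : ∀ i, |p i - q i| ≤ (p i + q i) * (1 - K⁻¹) := fun i =>
    abs_sub_le_of_ratio (hp0 i) (hq0 i) hK1 (hcross x y hZx hZy hxy i)
      (hcross y x hZy hZx (fun j => by rw [abs_sub_comm]; exact hxy j) i)
  have hsum : ∑ i, |p i - q i| ≤ 2 * (1 - K⁻¹) := by
    calc ∑ i, |p i - q i| ≤ ∑ i, (p i + q i) * (1 - K⁻¹) := Finset.sum_le_sum fun i _ => hpoint i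
      _ = (∑ i, p i + ∑ i, q i) * (1 - K⁻¹) := by
          rw [← Finset.sum_add_distrib, Finset.sum_mul]
      _ = 2 * (1 - K⁻¹) := by rw [hps, hqs]; norm_num
  have hfinal : 2 * (1 - K⁻¹) ≤ 4 * η * δ := by
    have hKinv : K⁻¹ = Real.exp (-(2 * η * δ)) := by rw [hKdef, ← Real.exp_neg]
    have := Real.add_one_le_exp (-(2 * η * δ))
    rw [hKinv]; nlinarith
  calc ∑ i, |Real.exp (η * (x i - η⁻¹ * Real.log (∑ j, Real.exp (η * x j)))) -
          Real.exp (η * (y i - η⁻¹ * Real.log (∑ j, Real.exp (η * y j))))|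
      = ∑ i, |p i - q i| := by
        refine Finset.sum_congr rfl fun i _ => ?_
        rw [softmax_pdf hη, softmax_pdf hη]
    _ ≤ 2 * (1 - K⁻¹) := hsum
    _ ≤ 4 * η * δ := hfinal
namespace QSE
section DomLemmas
set_option linter.unusedSectionVars false
variable {S A B : Type} [Fintype S] [Fintype A] [Fintype B]
variable [Nonempty S] [Nonempty A] [Nonempty B]

lemma effH_succ (n : ℕ) (γ : ℝ) : effH (n + 1) γ = 1 + γ * effH n γ := by
  simp only [effH, geom_sum_succ]; ring

lemma effH_nonneg (n : ℕ) {γ : ℝ} (hγ0 : 0 ≤ γ) : 0 ≤ effH n γ :=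
  Finset.sum_nonneg fun i _ => pow_nonneg hγ0 i

lemma effH_mono {n H : ℕ} (hn : n ≤ H) {γ : ℝ} (hγ0 : 0 ≤ γ) : effH n γ ≤ effH H γ :=
  Finset.sum_le_sum_of_subset_of_nonneg
    (Finset.range_subset_range.mpr hn) (fun i _ _ => pow_nonneg hγ0 i)

lemma hstep_lt {H n : ℕ} (hH : 1 ≤ H) : H - (n + 1) < H := by omega

lemma softV_succ (η γ : ℝ) (H : ℕ) (pol : ℕ → S → B → A → ℝ)
    (r : ℕ → S → A → B → ℝ) (P : ℕ → S → A → B → S → ℝ) {h : ℕ} (hh : h < H) (s : S) :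
    softV η γ H pol r P h s =
      η⁻¹ * Real.log (∑ b, Real.exp (η * softQ η γ H pol r P h s b)) := by
  have hidx : H - h = (H - (h + 1)) + 1 := by omega
  have hidx2 : H - ((H - (h + 1)) + 1) = h := by omega
  simp only [softV, softQ, hidx, vAux, hidx2]

lemma qr_sum_one {η : ℝ} (hη : 0 < η) (γ : ℝ) (H : ℕ) (pol : ℕ → S → B → A → ℝ)
    (r : ℕ → S → A → B → ℝ) (P : ℕ → S → A → B → S → ℝ) {h : ℕ} (hh : h < H) (s : S) :
    ∑ b, qr η γ H pol r P h s b = 1 := by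
  simp only [qr, softA, softV_succ η γ H pol r P hh s]
  exact softmax_sum_one hη _

lemma leadW_succ (η γ : ℝ) (H : ℕ) (pol : ℕ → S → B → A → ℝ)
    (r : ℕ → S → A → B → ℝ) (P : ℕ → S → A → B → S → ℝ) (u : ℕ → S → A → B → ℝ)
    {h : ℕ} (hh : h < H) (s : S) :
    leadW η γ H pol r P u h s = ∑ b, qr η γ H pol r P h s b * ∑ a, pol h s b a *
      (u h s a b + ∑ s', P h s a b s' * leadW η γ H pol r P u (h + 1) s') := by
  have hidx : H - h = (H - (h + 1)) + 1 := by omega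
  have hidx2 : H - ((H - (h + 1)) + 1) = h := by omega
  simp only [leadW, hidx, wAux, hidx2]

lemma vAux_nonneg {η γ : ℝ} (hη : 0 < η) (hγ0 : 0 ≤ γ) {H : ℕ} (hH : 1 ≤ H)
    {pol : ℕ → S → B → A → ℝ} {r : ℕ → S → A → B → ℝ} {P : ℕ → S → A → B → S → ℝ}
    (hpol0 : ∀ h < H, ∀ s b a, 0 ≤ pol h s b a)
    (hr : ∀ h < H, ∀ s a b, r h s a b ∈ Set.Icc (0 : ℝ) 1)
    (hP0 : ∀ h < H, ∀ s a b s', 0 ≤ P h s a b s') :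
    ∀ n s, 0 ≤ vAux η γ H pol r P n s := by
  intro n
  induction n with
  | zero => intro s; simp [vAux]
  | succ n ih =>
    intro s
    have hlt : H - (n + 1) < H := hstep_lt hH
    rw [vAux]
    refine logsum_nonneg hη fun b => ?_
    have h1 : 0 ≤ rPol pol r (H - (n + 1)) s b :=
      Finset.sum_nonneg fun a _ => mul_nonneg (hpol0 _ hlt s b a) (hr _ hlt s a b).1
    have h2 : 0 ≤ ∑ s', pPol pol P (H - (n + 1)) s b s' * vAux η γ H pol r P n s' :=
      Finset.sum_nonneg fun s' _ => mul_nonneg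
        (Finset.sum_nonneg fun a _ => mul_nonneg (hpol0 _ hlt s b a) (hP0 _ hlt s a b s'))
        (ih s')
    positivity

lemma vAux_le {η γ : ℝ} (hη : 0 < η) (hγ0 : 0 ≤ γ) {H : ℕ} (hH : 1 ≤ H)
    {pol : ℕ → S → B → A → ℝ} {r : ℕ → S → A → B → ℝ} {P : ℕ → S → A → B → S → ℝ}
    (hpol0 : ∀ h < H, ∀ s b a, 0 ≤ pol h s b a)
    (hpol1 : ∀ h < H, ∀ s b, ∑ a, pol h s b a = 1)
    (hr : ∀ h < H, ∀ s a b, r h s a b ∈ Set.Icc (0 : ℝ) 1)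
    (hP0 : ∀ h < H, ∀ s a b s', 0 ≤ P h s a b s')
    (hP1 : ∀ h < H, ∀ s a b, ∑ s', P h s a b s' = 1) :
    ∀ n s, vAux η γ H pol r P n s ≤
      (η⁻¹ * Real.log (Fintype.card B) + 1) * effH n γ := by
  have hcard : (1:ℝ) ≤ (Fintype.card B : ℝ) := by exact_mod_cast Fintype.card_pos
  have hlog : 0 ≤ Real.log (Fintype.card B) := Real.log_nonneg hcard
  have hc0 : 0 ≤ η⁻¹ * Real.log (Fintype.card B) + 1 := by positivity
  intro n
  induction n with
  | zero => intro s; simp [vAux, effH]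
  | succ n ih =>
    intro s
    have hlt : H - (n + 1) < H := hstep_lt hH
    rw [vAux]
    have key : ∀ b : B, rPol pol r (H - (n + 1)) s b +
        γ * ∑ s', pPol pol P (H - (n + 1)) s b s' * vAux η γ H pol r P n s' ≤
        1 + γ * ((η⁻¹ * Real.log (Fintype.card B) + 1) * effH n γ) := by
      intro b
      have h1 : rPol pol r (H - (n + 1)) s b ≤ 1 := by
        calc rPol pol r (H - (n + 1)) s b ≤ ∑ a, pol (H - (n+1)) s b a * 1 :=
              Finset.sum_le_sum fun a _ => mul_le_mul_of_nonneg_left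
                (hr _ hlt s a b).2 (hpol0 _ hlt s b a)
          _ = 1 := by rw [← Finset.sum_mul, hpol1 _ hlt s b, one_mul]
      have h2 : ∑ s', pPol pol P (H - (n + 1)) s b s' * vAux η γ H pol r P n s' ≤
          (η⁻¹ * Real.log (Fintype.card B) + 1) * effH n γ := by
        have hps : ∑ s', pPol pol P (H - (n + 1)) s b s' = 1 := by
          simp only [pPol]
          rw [Finset.sum_comm]
          calc ∑ a, ∑ s', pol (H-(n+1)) s b a * P (H-(n+1)) s a b s'
              = ∑ a, pol (H-(n+1)) s b a * ∑ s', P (H-(n+1)) s a b s' := by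
                refine Finset.sum_congr rfl fun a _ => ?_
                rw [Finset.mul_sum]
            _ = 1 := by
                rw [← hpol1 _ hlt s b]
                refine Finset.sum_congr rfl fun a _ => ?_
                rw [hP1 _ hlt s a b, mul_one]
        calc ∑ s', pPol pol P (H - (n + 1)) s b s' * vAux η γ H pol r P n s'
            ≤ ∑ s', pPol pol P (H - (n + 1)) s b s' *
              ((η⁻¹ * Real.log (Fintype.card B) + 1) * effH n γ) :=
              Finset.sum_le_sum fun s' _ => mul_le_mul_of_nonneg_left (ih s')
                (Finset.sum_nonneg fun a _ => mul_nonneg (hpol0 _ hlt s b a) (hP0 _ hlt s a b s'))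
          _ = _ := by rw [← Finset.sum_mul, hps, one_mul]
      nlinarith [mul_le_mul_of_nonneg_left h2 hγ0]
    calc η⁻¹ * Real.log (∑ b, Real.exp (η * (rPol pol r (H - (n + 1)) s b +
          γ * ∑ s', pPol pol P (H - (n + 1)) s b s' * vAux η γ H pol r P n s')))
        ≤ η⁻¹ * Real.log (Fintype.card B) +
          (1 + γ * ((η⁻¹ * Real.log (Fintype.card B) + 1) * effH n γ)) :=
          logsum_le_bound hη key
      _ = (η⁻¹ * Real.log (Fintype.card B) + 1) * effH (n + 1) γ := by
          rw [effH_succ]; ring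

end DomLemmas
end QSE
namespace QSE
section DomLemmas2
set_option linter.unusedSectionVars false
variable {S A B : Type} [Fintype S] [Fintype A] [Fintype B]
variable [Nonempty S] [Nonempty A] [Nonempty B]

lemma wsum_le {ι : Type*} (t : Finset ι) (w f : ι → ℝ) (C : ℝ)
    (hw0 : ∀ i ∈ t, 0 ≤ w i) (hw1 : ∑ i ∈ t, w i = 1) (hf : ∀ i ∈ t, f i ≤ C) :
    ∑ i ∈ t, w i * f i ≤ C := by
  calc ∑ i ∈ t, w i * f i ≤ ∑ i ∈ t, w i * C :=
        Finset.sum_le_sum fun i hi => mul_le_mul_of_nonneg_left (hf i hi) (hw0 i hi)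
    _ = C := by rw [← Finset.sum_mul, hw1, one_mul]

lemma sq_sqrt_sub_le {p q : ℝ} (hp : 0 ≤ p) (hq : 0 ≤ q) :
    (Real.sqrt p - Real.sqrt q) ^ 2 ≤ |p - q| := by
  have hsp := Real.sq_sqrt hp
  have hsq := Real.sq_sqrt hq
  have h1 := Real.sqrt_nonneg p
  have h2 := Real.sqrt_nonneg q
  rcases le_total p q with h | h
  · rw [abs_of_nonpos (by linarith)]
    have h3 : Real.sqrt p ≤ Real.sqrt q := Real.sqrt_le_sqrt h
    nlinarith
  · rw [abs_of_nonneg (by linarith)]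
    have h3 : Real.sqrt q ≤ Real.sqrt p := Real.sqrt_le_sqrt h
    nlinarith

lemma pPol_nonneg {H : ℕ} {pol : ℕ → S → B → A → ℝ} {P : ℕ → S → A → B → S → ℝ}
    {h : ℕ} (hh : h < H)
    (hpol0 : ∀ h < H, ∀ s b a, 0 ≤ pol h s b a)
    (hP0 : ∀ h < H, ∀ s a b s', 0 ≤ P h s a b s') (s : S) (b : B) (s' : S) :
    0 ≤ pPol pol P h s b s' :=
  Finset.sum_nonneg fun a _ => mul_nonneg (hpol0 _ hh s b a) (hP0 _ hh s a b s')

lemma pPol_sum_one {H : ℕ} {pol : ℕ → S → B → A → ℝ} {P : ℕ → S → A → B → S → ℝ}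
    {h : ℕ} (hh : h < H)
    (hpol1 : ∀ h < H, ∀ s b, ∑ a, pol h s b a = 1)
    (hP1 : ∀ h < H, ∀ s a b, ∑ s', P h s a b s' = 1) (s : S) (b : B) :
    ∑ s', pPol pol P h s b s' = 1 := by
  simp only [pPol]
  rw [Finset.sum_comm]
  calc ∑ a, ∑ s', pol h s b a * P h s a b s'
      = ∑ a, pol h s b a * ∑ s', P h s a b s' := by
        refine Finset.sum_congr rfl fun a _ => ?_
        rw [Finset.mul_sum]
    _ = 1 := by
        rw [← hpol1 _ hh s b]
        refine Finset.sum_congr rfl fun a _ => ?_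
        rw [hP1 _ hh s a b, mul_one]

lemma rPol_mem {H : ℕ} {pol : ℕ → S → B → A → ℝ} {r : ℕ → S → A → B → ℝ}
    {h : ℕ} (hh : h < H)
    (hpol0 : ∀ h < H, ∀ s b a, 0 ≤ pol h s b a)
    (hpol1 : ∀ h < H, ∀ s b, ∑ a, pol h s b a = 1)
    (hr : ∀ h < H, ∀ s a b, r h s a b ∈ Set.Icc (0 : ℝ) 1) (s : S) (b : B) :
    rPol pol r h s b ∈ Set.Icc (0 : ℝ) 1 := by
  constructor
  · exact Finset.sum_nonneg fun a _ => mul_nonneg (hpol0 _ hh s b a) (hr _ hh s a b).1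
  · exact wsum_le _ _ _ _ (fun a _ => hpol0 _ hh s b a) (hpol1 _ hh s b)
      (fun a _ => (hr _ hh s a b).2)

lemma wAux_bounds {H : ℕ} (hH : 1 ≤ H) {pol : ℕ → S → B → A → ℝ}
    {nu : ℕ → S → B → ℝ} {P : ℕ → S → A → B → S → ℝ} {u : ℕ → S → A → B → ℝ}
    (hpol0 : ∀ h < H, ∀ s b a, 0 ≤ pol h s b a)
    (hpol1 : ∀ h < H, ∀ s b, ∑ a, pol h s b a = 1)
    (hnu0 : ∀ h < H, ∀ s b, 0 ≤ nu h s b)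
    (hnu1 : ∀ h < H, ∀ s, ∑ b, nu h s b = 1)
    (hP0 : ∀ h < H, ∀ s a b s', 0 ≤ P h s a b s')
    (hP1 : ∀ h < H, ∀ s a b, ∑ s', P h s a b s' = 1)
    (hu : ∀ h < H, ∀ s a b, u h s a b ∈ Set.Icc (0 : ℝ) 1) :
    ∀ n s, 0 ≤ wAux H pol nu P u n s ∧ wAux H pol nu P u n s ≤ (n : ℝ) := by
  intro n
  induction n with
  | zero => intro s; simp [wAux]
  | succ n ih =>
    intro s
    have hlt : H - (n + 1) < H := hstep_lt hH
    rw [wAux]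
    have hg : ∀ a b, 0 ≤ u (H - (n+1)) s a b + ∑ s', P (H - (n+1)) s a b s' *
        wAux H pol nu P u n s' ∧ u (H - (n+1)) s a b + ∑ s', P (H - (n+1)) s a b s' *
        wAux H pol nu P u n s' ≤ (n : ℝ) + 1 := by
      intro a b
      have h1 : 0 ≤ ∑ s', P (H - (n+1)) s a b s' * wAux H pol nu P u n s' :=
        Finset.sum_nonneg fun s' _ => mul_nonneg (hP0 _ hlt s a b s') (ih s').1
      have h2 : ∑ s', P (H - (n+1)) s a b s' * wAux H pol nu P u n s' ≤ (n : ℝ) :=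
        wsum_le _ _ _ _ (fun s' _ => hP0 _ hlt s a b s') (hP1 _ hlt s a b)
          (fun s' _ => (ih s').2)
      have h3 := hu _ hlt s a b
      exact ⟨by linarith [h3.1], by linarith [h3.2]⟩
    have hG : ∀ b, 0 ≤ ∑ a, pol (H - (n+1)) s b a * (u (H - (n+1)) s a b +
        ∑ s', P (H - (n+1)) s a b s' * wAux H pol nu P u n s') ∧
        ∑ a, pol (H - (n+1)) s b a * (u (H - (n+1)) s a b +
        ∑ s', P (H - (n+1)) s a b s' * wAux H pol nu P u n s') ≤ (n : ℝ) + 1 := by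
      intro b
      constructor
      · exact Finset.sum_nonneg fun a _ => mul_nonneg (hpol0 _ hlt s b a) (hg a b).1
      · exact wsum_le _ _ _ _ (fun a _ => hpol0 _ hlt s b a) (hpol1 _ hlt s b)
          (fun a _ => (hg a b).2)
    constructor
    · exact Finset.sum_nonneg fun b _ => mul_nonneg (hnu0 _ hlt s b) (hG b).1
    · push_cast
      exact wsum_le _ _ _ _ (fun b _ => hnu0 _ hlt s b) (hnu1 _ hlt s)
        (fun b _ => (hG b).2)

end DomLemmas2
end QSE
open QSE
set_option maxHeartbeats 2000000 in

/-- Stability of value functions and quantal responses under model and policy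
perturbations (steps 0-based).  With `B_A = (1 + eff_H(γ))(η⁻¹ log|B| + 1)` and
`ε`-closeness of the two models `(u,r,P)`, `(ũ,r̃,P̃)` and the two leader policies
`π, π̃`, for all `h < H` and all states:
(i) `‖Q_h − Q̃_h‖_∞ ≤ 2ε(1+γB_A)eff_H(γ)`; (ii) `‖V_h − Ṽ_h‖_∞ ≤ 2ε(1+γB_A)eff_H(γ)`;
(iii) `D_H²(ν_h, ν̃_h) ≤ ‖ν_h − ν̃_h‖₁ ≤ 8ηε(1+γB_A)eff_H(γ)`;
(iv) `‖U_h − Ũ_h‖_∞ ≤ εH(8ηH(1+γB_A)eff_H(γ)+1+2H)`;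
(v) `‖W_h − W̃_h‖_∞ ≤ ε(H+1)(8ηH(1+γB_A)eff_H(γ)+1+2H)`. -/
theorem stability_of_values_and_responses
    {S A B : Type} [Fintype S] [Fintype A] [Fintype B]
    [Nonempty S] [Nonempty A] [Nonempty B]
    (H : ℕ) (hH : 1 ≤ H) (η γ : ℝ) (hη : 0 < η) (hγ0 : 0 ≤ γ) (hγ1 : γ ≤ 1)
    -- model M = (u, r, P)
    (P : ℕ → S → A → B → S → ℝ)
    (hP0 : ∀ h < H, ∀ s a b s', 0 ≤ P h s a b s')
    (hP1 : ∀ h < H, ∀ s a b, ∑ s', P h s a b s' = 1)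
    (u : ℕ → S → A → B → ℝ) (hu : ∀ h < H, ∀ s a b, u h s a b ∈ Set.Icc (0 : ℝ) 1)
    (r : ℕ → S → A → B → ℝ) (hr : ∀ h < H, ∀ s a b, r h s a b ∈ Set.Icc (0 : ℝ) 1)
    -- model M̃ = (ũ, r̃, P̃)
    (Pt : ℕ → S → A → B → S → ℝ)
    (hPt0 : ∀ h < H, ∀ s a b s', 0 ≤ Pt h s a b s')
    (hPt1 : ∀ h < H, ∀ s a b, ∑ s', Pt h s a b s' = 1)
    (ut : ℕ → S → A → B → ℝ) (hut : ∀ h < H, ∀ s a b, ut h s a b ∈ Set.Icc (0 : ℝ) 1)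
    (rt : ℕ → S → A → B → ℝ) (hrt : ∀ h < H, ∀ s a b, rt h s a b ∈ Set.Icc (0 : ℝ) 1)
    -- leader policies π and π̃
    (pol : ℕ → S → B → A → ℝ)
    (hpol0 : ∀ h < H, ∀ s b a, 0 ≤ pol h s b a)
    (hpol1 : ∀ h < H, ∀ s b, ∑ a, pol h s b a = 1)
    (polt : ℕ → S → B → A → ℝ)
    (hpolt0 : ∀ h < H, ∀ s b a, 0 ≤ polt h s b a)
    (hpolt1 : ∀ h < H, ∀ s b, ∑ a, polt h s b a = 1)
    -- ε-closeness
    (ε : ℝ) (hε : 0 < ε)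
    (hu' : ∀ h < H, ∀ s a b, |u h s a b - ut h s a b| ≤ ε)
    (hr' : ∀ h < H, ∀ s a b, |r h s a b - rt h s a b| ≤ ε)
    (hP' : ∀ h < H, ∀ s a b, ∑ s', |P h s a b s' - Pt h s a b s'| ≤ ε)
    (hpol' : ∀ h < H, ∀ s b, ∑ a, |pol h s b a - polt h s b a| ≤ ε) :
    ∀ h < H,
      (∀ (s : S) (b : B),
        |softQ η γ H pol r P h s b - softQ η γ H polt rt Pt h s b| ≤
          2 * ε * (1 + γ * ((1 + effH H γ) * (η⁻¹ * Real.log (Fintype.card B) + 1))) *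
            effH H γ) ∧
      (∀ s : S,
        |softV η γ H pol r P h s - softV η γ H polt rt Pt h s| ≤
          2 * ε * (1 + γ * ((1 + effH H γ) * (η⁻¹ * Real.log (Fintype.card B) + 1))) *
            effH H γ) ∧
      (∀ s : S,
        (1 / 2) * ∑ b, (Real.sqrt (qr η γ H pol r P h s b) -
            Real.sqrt (qr η γ H polt rt Pt h s b)) ^ 2 ≤
          ∑ b, |qr η γ H pol r P h s b - qr η γ H polt rt Pt h s b| ∧
        ∑ b, |qr η γ H pol r P h s b - qr η γ H polt rt Pt h s b| ≤
          8 * η * ε *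
            (1 + γ * ((1 + effH H γ) * (η⁻¹ * Real.log (Fintype.card B) + 1))) *
            effH H γ) ∧
      (∀ (s : S) (a : A) (b : B),
        |leadU η γ H pol r P u h s a b - leadU η γ H polt rt Pt ut h s a b| ≤
          ε * (H : ℝ) *
            (8 * η * (H : ℝ) *
                (1 + γ * ((1 + effH H γ) * (η⁻¹ * Real.log (Fintype.card B) + 1))) *
                effH H γ + 1 + 2 * (H : ℝ))) ∧
      (∀ s : S,
        |leadW η γ H pol r P u h s - leadW η γ H polt rt Pt ut h s| ≤
          ε * ((H : ℝ) + 1) *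
            (8 * η * (H : ℝ) *
                (1 + γ * ((1 + effH H γ) * (η⁻¹ * Real.log (Fintype.card B) + 1))) *
                effH H γ + 1 + 2 * (H : ℝ))) := by

  -- basic constants
  have hcard : (1:ℝ) ≤ (Fintype.card B : ℝ) := by exact_mod_cast Fintype.card_pos
  have hlog : (0:ℝ) ≤ Real.log (Fintype.card B) := Real.log_nonneg hcard
  set c : ℝ := η⁻¹ * Real.log (Fintype.card B) + 1 with hc
  set E : ℝ := effH H γ with hE
  set BA : ℝ := (1 + E) * c with hBA
  set Cq : ℝ := 1 + γ * BA with hCq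
  set K : ℝ := 8 * η * (H:ℝ) * Cq * E + 1 + 2 * (H:ℝ) with hK
  have hc0 : (0:ℝ) ≤ c := by rw [hc]; positivity
  have hE0 : (0:ℝ) ≤ E := effH_nonneg H hγ0
  have hE1 : (1:ℝ) ≤ E := by
    obtain ⟨m, hm⟩ : ∃ m, H = m + 1 := ⟨H - 1, by omega⟩
    rw [hE, hm, effH_succ]
    nlinarith [effH_nonneg m hγ0]
  have hBA0 : (0:ℝ) ≤ BA := by rw [hBA]; positivity
  have hCq0 : (0:ℝ) ≤ Cq := by rw [hCq]; positivity
  have hK0 : (0:ℝ) ≤ K := by rw [hK]; positivity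
  have hK1H : 1 + (H:ℝ) ≤ K := by
    have h8 : (0:ℝ) ≤ 8 * η * (H:ℝ) * Cq * E := by positivity
    have hH1 : (1:ℝ) ≤ (H:ℝ) := by exact_mod_cast hH
    rw [hK]; nlinarith

  -- value bounds
  have hvle : ∀ n ≤ H, ∀ s : S, vAux η γ H pol r P n s ≤ BA := by
    intro n hn s
    refine (vAux_le hη hγ0 hH hpol0 hpol1 hr hP0 hP1 n s).trans ?_
    have := effH_mono hn hγ0 (γ := γ)
    rw [hBA]; rw [hc] at *; nlinarith [effH_nonneg n hγ0]
  have hvle' : ∀ n ≤ H, ∀ s : S, vAux η γ H polt rt Pt n s ≤ BA := by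
    intro n hn s
    refine (vAux_le hη hγ0 hH hpolt0 hpolt1 hrt hPt0 hPt1 n s).trans ?_
    have := effH_mono hn hγ0 (γ := γ)
    rw [hBA]; rw [hc] at *; nlinarith [effH_nonneg n hγ0]
  have hv0 : ∀ n (s : S), 0 ≤ vAux η γ H pol r P n s :=
    vAux_nonneg hη hγ0 hH hpol0 hr hP0
  have hv0' : ∀ n (s : S), 0 ≤ vAux η γ H polt rt Pt n s :=
    vAux_nonneg hη hγ0 hH hpolt0 hrt hPt0
  -- reward and transition perturbation bounds
  have hrd : ∀ h < H, ∀ (s : S) (b : B),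
      |rPol pol r h s b - rPol polt rt h s b| ≤ 2 * ε := by
    intro h hh s b
    have := weighted_diff Finset.univ (pol h s b) (polt h s b)
      (fun a => r h s a b) (fun a => rt h s a b) ε 1 ε (by norm_num) hε.le
      (fun a _ => abs_le.mpr ⟨by linarith [(hr h hh s a b).1], (hr h hh s a b).2⟩)
      (fun a _ => hr' h hh s a b) (fun a _ => hpolt0 h hh s b a)
      (le_of_eq (hpolt1 h hh s b)) (hpol' h hh s b)
    simp only [rPol]
    calc |∑ a, pol h s b a * r h s a b - ∑ a, polt h s b a * rt h s a b| ≤ ε * 1 + ε := this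
      _ = 2 * ε := by ring
  have hpd : ∀ h < H, ∀ (s : S) (b : B),
      ∑ s', |pPol pol P h s b s' - pPol polt Pt h s b s'| ≤ 2 * ε := by
    intro h hh s b
    simp only [pPol]
    calc ∑ s', |∑ a, pol h s b a * P h s a b s' - ∑ a, polt h s b a * Pt h s a b s'|
        ≤ ∑ s', ∑ a, (|pol h s b a - polt h s b a| * P h s a b s' +
            polt h s b a * |P h s a b s' - Pt h s a b s'|) := by
          refine Finset.sum_le_sum fun s' _ => ?_
          rw [← Finset.sum_sub_distrib]
          refine sum_abs_le' _ _ _ fun a _ => ?_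
          have heq : pol h s b a * P h s a b s' - polt h s b a * Pt h s a b s' =
              (pol h s b a - polt h s b a) * P h s a b s' +
              polt h s b a * (P h s a b s' - Pt h s a b s') := by ring
          rw [heq]
          refine (abs_add_le _ _).trans (add_le_add ?_ ?_)
          · rw [abs_mul, abs_of_nonneg (hP0 h hh s a b s')]
          · rw [abs_mul, abs_of_nonneg (hpolt0 h hh s b a)]
      _ = ∑ a, (|pol h s b a - polt h s b a| * ∑ s', P h s a b s' +
            polt h s b a * ∑ s', |P h s a b s' - Pt h s a b s'|) := by
          rw [Finset.sum_comm]
          refine Finset.sum_congr rfl fun a _ => ?_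
          rw [Finset.sum_add_distrib, Finset.mul_sum, Finset.mul_sum]
      _ ≤ ∑ a, (|pol h s b a - polt h s b a| * 1 + polt h s b a * ε) := by
          refine Finset.sum_le_sum fun a _ => add_le_add ?_ ?_
          · exact mul_le_mul_of_nonneg_left (le_of_eq (hP1 h hh s a b)) (abs_nonneg _)
          · exact mul_le_mul_of_nonneg_left (hP' h hh s a b) (hpolt0 h hh s b a)
      _ = (∑ a, |pol h s b a - polt h s b a|) + (∑ a, polt h s b a) * ε := by
          rw [Finset.sum_add_distrib, Finset.sum_mul]
          simp
      _ ≤ ε + 1 * ε := add_le_add (hpol' h hh s b)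
          (mul_le_mul_of_nonneg_right (le_of_eq (hpolt1 h hh s b)) hε.le)
      _ = 2 * ε := by ring

  -- pointwise Q-term perturbation bound
  have hQaux : ∀ h < H, ∀ n ≤ H,
      (∀ s' : S, |vAux η γ H pol r P n s' - vAux η γ H polt rt Pt n s'| ≤
        2 * ε * Cq * effH n γ) →
      ∀ (s : S) (b : B),
      |rPol pol r h s b + γ * ∑ s', pPol pol P h s b s' * vAux η γ H pol r P n s' -
        (rPol polt rt h s b + γ * ∑ s', pPol polt Pt h s b s' * vAux η γ H polt rt Pt n s')| ≤
      2 * ε * Cq * (1 + γ * effH n γ) := by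
    intro h hh n hn hvd s b
    have hsum : |∑ s', pPol pol P h s b s' * vAux η γ H pol r P n s' -
        ∑ s', pPol polt Pt h s b s' * vAux η γ H polt rt Pt n s'| ≤
        2 * ε * BA + 2 * ε * Cq * effH n γ := by
      refine weighted_diff Finset.univ _ _ _ _ (2 * ε) BA (2 * ε * Cq * effH n γ)
        hBA0 (by have := effH_nonneg n hγ0; positivity) ?_ (fun s' _ => hvd s') ?_ ?_ ?_
      · intro s' _
        rw [abs_of_nonneg (hv0 n s')]
        exact hvle n hn s'
      · intro s' _
        exact pPol_nonneg hh hpolt0 hPt0 s b s'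
      · exact le_of_eq (pPol_sum_one hh hpolt1 hPt1 s b)
      · exact hpd h hh s b
    have h1 := hrd h hh s b
    calc |rPol pol r h s b + γ * ∑ s', pPol pol P h s b s' * vAux η γ H pol r P n s' -
        (rPol polt rt h s b + γ * ∑ s', pPol polt Pt h s b s' * vAux η γ H polt rt Pt n s')|
        ≤ |rPol pol r h s b - rPol polt rt h s b| +
          γ * |∑ s', pPol pol P h s b s' * vAux η γ H pol r P n s' -
            ∑ s', pPol polt Pt h s b s' * vAux η γ H polt rt Pt n s'| := by
          have habs := abs_add_le (rPol pol r h s b - rPol polt rt h s b)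
            (γ * (∑ s', pPol pol P h s b s' * vAux η γ H pol r P n s' -
              ∑ s', pPol polt Pt h s b s' * vAux η γ H polt rt Pt n s'))
          rw [abs_mul, abs_of_nonneg hγ0] at habs
          refine le_trans (le_of_eq ?_) habs
          ring_nf
      _ ≤ 2 * ε + γ * (2 * ε * BA + 2 * ε * Cq * effH n γ) := by
          refine add_le_add h1 (mul_le_mul_of_nonneg_left hsum hγ0)
      _ ≤ 2 * ε * Cq * (1 + γ * effH n γ) := by rw [hCq]; nlinarith [effH_nonneg n hγ0]
  -- vAux perturbation bound
  have hQV : ∀ n ≤ H, ∀ s : S,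
      |vAux η γ H pol r P n s - vAux η γ H polt rt Pt n s| ≤ 2 * ε * Cq * effH n γ := by
    intro n
    induction n with
    | zero => intro _ s; simp [vAux, effH]
    | succ n ih =>
      intro hn1 s
      have hn : n ≤ H := by omega
      have hlt : H - (n + 1) < H := hstep_lt hH
      rw [vAux, vAux]
      have key := logsum_lip (δ := 2 * ε * Cq * (1 + γ * effH n γ)) hη
        (x := fun b => rPol pol r (H - (n+1)) s b +
          γ * ∑ s', pPol pol P (H - (n+1)) s b s' * vAux η γ H pol r P n s')
        (y := fun b => rPol polt rt (H - (n+1)) s b +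
          γ * ∑ s', pPol polt Pt (H - (n+1)) s b s' * vAux η γ H polt rt Pt n s')
        (fun b => hQaux _ hlt n hn (ih hn) s b)
      rw [effH_succ]
      exact key

  have h2εCq : (0:ℝ) ≤ 2 * ε * Cq := by positivity
  have hQd : ∀ h < H, ∀ (s : S) (b : B),
      |softQ η γ H pol r P h s b - softQ η γ H polt rt Pt h s b| ≤ 2 * ε * Cq * E := by
    intro h hh s b
    have hn : H - (h + 1) ≤ H := Nat.sub_le _ _
    have key := hQaux h hh (H - (h + 1)) hn (fun s' => hQV _ hn s') s b
    have hidx : H - (h + 1) + 1 = H - h := by omega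
    have h1 : 2 * ε * Cq * (1 + γ * effH (H - (h + 1)) γ) ≤ 2 * ε * Cq * E := by
      refine mul_le_mul_of_nonneg_left ?_ h2εCq
      rw [show 1 + γ * effH (H - (h + 1)) γ = effH (H - (h + 1) + 1) γ from (effH_succ _ _).symm,
        hidx]
      exact effH_mono (Nat.sub_le _ _) hγ0
    simp only [softQ, softV]
    exact key.trans h1
  have hVd : ∀ h (s : S),
      |softV η γ H pol r P h s - softV η γ H polt rt Pt h s| ≤ 2 * ε * Cq * E := by
    intro h s
    refine (hQV (H - h) (Nat.sub_le _ _) s).trans ?_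
    exact mul_le_mul_of_nonneg_left (effH_mono (Nat.sub_le _ _) hγ0) h2εCq
  have hL1 : ∀ h < H, ∀ s : S,
      ∑ b, |qr η γ H pol r P h s b - qr η γ H polt rt Pt h s b| ≤
        8 * η * ε * Cq * E := by
    intro h hh s
    have hδ : (0:ℝ) ≤ 2 * ε * Cq * E := by positivity
    have key := softmax_l1 (ι := B) hη hδ (fun b => softQ η γ H pol r P h s b)
      (fun b => softQ η γ H polt rt Pt h s b) (fun b => hQd h hh s b)
    calc ∑ b, |qr η γ H pol r P h s b - qr η γ H polt rt Pt h s b|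
        = ∑ b, |Real.exp (η * (softQ η γ H pol r P h s b -
              η⁻¹ * Real.log (∑ b', Real.exp (η * softQ η γ H pol r P h s b')))) -
            Real.exp (η * (softQ η γ H polt rt Pt h s b -
              η⁻¹ * Real.log (∑ b', Real.exp (η * softQ η γ H polt rt Pt h s b'))))| := by
          refine Finset.sum_congr rfl fun b _ => ?_
          simp only [qr, softA, softV_succ η γ H pol r P hh s,
            softV_succ η γ H polt rt Pt hh s]
      _ ≤ 4 * η * (2 * ε * Cq * E) := key
      _ = 8 * η * ε * Cq * E := by ring

  have hqr0 : ∀ h, h < H → ∀ (s : S) (b : B), 0 ≤ qr η γ H pol r P h s b :=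
    fun h _ s b => (Real.exp_pos _).le
  have hqrt0 : ∀ h, h < H → ∀ (s : S) (b : B), 0 ≤ qr η γ H polt rt Pt h s b :=
    fun h _ s b => (Real.exp_pos _).le
  have hqr1 : ∀ h < H, ∀ s : S, ∑ b, qr η γ H pol r P h s b = 1 :=
    fun h hh s => qr_sum_one hη γ H pol r P hh s
  have hqrt1 : ∀ h < H, ∀ s : S, ∑ b, qr η γ H polt rt Pt h s b = 1 :=
    fun h hh s => qr_sum_one hη γ H polt rt Pt hh s
  have hW := wAux_bounds hH hpol0 hpol1 hqr0 hqr1 hP0 hP1 hu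
  have hWt := wAux_bounds hH hpolt0 hpolt1 hqrt0 hqrt1 hPt0 hPt1 hut
  have hWd : ∀ n ≤ H, ∀ s : S,
      |wAux H pol (qr η γ H pol r P) P u n s -
        wAux H polt (qr η γ H polt rt Pt) Pt ut n s| ≤ (n : ℝ) * (ε * K) := by
    intro n
    induction n with
    | zero => intro _ s; simp [wAux]
    | succ n ih =>
      intro hn1 s
      have hn : n ≤ H := by omega
      have ihd := ih hn
      have hnH : (n : ℝ) + 1 ≤ (H : ℝ) := by exact_mod_cast hn1
      have hnn : (n : ℝ) ≤ (H : ℝ) := by exact_mod_cast hn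
      have hlt : H - (n + 1) < H := hstep_lt hH
      rw [wAux, wAux]
      have hWabs : ∀ s' : S, |wAux H pol (qr η γ H pol r P) P u n s'| ≤ (H : ℝ) := by
        intro s'
        rw [abs_of_nonneg (hW n s').1]
        exact (hW n s').2.trans hnn
      have hgd : ∀ (a : A) (b : B),
          |(u (H - (n+1)) s a b + ∑ s', P (H - (n+1)) s a b s' *
              wAux H pol (qr η γ H pol r P) P u n s') -
            (ut (H - (n+1)) s a b + ∑ s', Pt (H - (n+1)) s a b s' *
              wAux H polt (qr η γ H polt rt Pt) Pt ut n s')| ≤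
          ε + (ε * (H : ℝ) + (n : ℝ) * (ε * K)) := by
        intro a b
        have hinner := weighted_diff Finset.univ (P (H - (n+1)) s a b)
          (Pt (H - (n+1)) s a b) (wAux H pol (qr η γ H pol r P) P u n)
          (wAux H polt (qr η γ H polt rt Pt) Pt ut n) ε (H : ℝ) ((n : ℝ) * (ε * K))
          (by positivity) (by positivity) (fun s' _ => hWabs s') (fun s' _ => ihd s')
          (fun s' _ => hPt0 _ hlt s a b s') (le_of_eq (hPt1 _ hlt s a b))
          (hP' _ hlt s a b)
        have heq : (u (H - (n+1)) s a b + ∑ s', P (H - (n+1)) s a b s' *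
              wAux H pol (qr η γ H pol r P) P u n s') -
            (ut (H - (n+1)) s a b + ∑ s', Pt (H - (n+1)) s a b s' *
              wAux H polt (qr η γ H polt rt Pt) Pt ut n s') =
            (u (H - (n+1)) s a b - ut (H - (n+1)) s a b) +
            ((∑ s', P (H - (n+1)) s a b s' * wAux H pol (qr η γ H pol r P) P u n s') -
             ∑ s', Pt (H - (n+1)) s a b s' *
               wAux H polt (qr η γ H polt rt Pt) Pt ut n s') := by ring
        rw [heq]
        exact (abs_add_le _ _).trans (add_le_add (hu' _ hlt s a b) hinner)
      have hgabs : ∀ (a : A) (b : B),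
          |u (H - (n+1)) s a b + ∑ s', P (H - (n+1)) s a b s' *
            wAux H pol (qr η γ H pol r P) P u n s'| ≤ (H : ℝ) := by
        intro a b
        have h1 : 0 ≤ ∑ s', P (H - (n+1)) s a b s' *
            wAux H pol (qr η γ H pol r P) P u n s' :=
          Finset.sum_nonneg fun s' _ => mul_nonneg (hP0 _ hlt s a b s') (hW n s').1
        have h2 : ∑ s', P (H - (n+1)) s a b s' *
            wAux H pol (qr η γ H pol r P) P u n s' ≤ (n : ℝ) :=
          wsum_le _ _ _ _ (fun s' _ => hP0 _ hlt s a b s') (hP1 _ hlt s a b)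
            (fun s' _ => (hW n s').2)
        have h3 := hu _ hlt s a b
        rw [abs_of_nonneg (by linarith [h3.1])]
        linarith [h3.2]
      have hGd : ∀ b : B,
          |∑ a, pol (H - (n+1)) s b a * (u (H - (n+1)) s a b +
              ∑ s', P (H - (n+1)) s a b s' * wAux H pol (qr η γ H pol r P) P u n s') -
            ∑ a, polt (H - (n+1)) s b a * (ut (H - (n+1)) s a b +
              ∑ s', Pt (H - (n+1)) s a b s' *
                wAux H polt (qr η γ H polt rt Pt) Pt ut n s')| ≤
          ε * (H : ℝ) + (ε + (ε * (H : ℝ) + (n : ℝ) * (ε * K))) := by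
        intro b
        refine weighted_diff Finset.univ (pol (H - (n+1)) s b) (polt (H - (n+1)) s b)
          (fun a => u (H - (n+1)) s a b + ∑ s', P (H - (n+1)) s a b s' *
            wAux H pol (qr η γ H pol r P) P u n s')
          (fun a => ut (H - (n+1)) s a b + ∑ s', Pt (H - (n+1)) s a b s' *
            wAux H polt (qr η γ H polt rt Pt) Pt ut n s')
          ε (H : ℝ) (ε + (ε * (H : ℝ) + (n : ℝ) * (ε * K)))
          (by positivity) (by positivity) (fun a _ => hgabs a b)
          (fun a _ => hgd a b) (fun a _ => hpolt0 _ hlt s b a)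
          (le_of_eq (hpolt1 _ hlt s b)) (hpol' _ hlt s b)
      have hGabs : ∀ b : B,
          |∑ a, pol (H - (n+1)) s b a * (u (H - (n+1)) s a b +
              ∑ s', P (H - (n+1)) s a b s' * wAux H pol (qr η γ H pol r P) P u n s')| ≤
            (H : ℝ) := by
        intro b
        refine (sum_abs_le' _ _ (fun a => pol (H - (n+1)) s b a * (H : ℝ)) ?_).trans ?_
        · intro a _
          rw [abs_mul, abs_of_nonneg (hpol0 _ hlt s b a)]
          exact mul_le_mul_of_nonneg_left (hgabs a b) (hpol0 _ hlt s b a)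
        · rw [← Finset.sum_mul, hpol1 _ hlt s b, one_mul]
      have hfinal := weighted_diff Finset.univ (qr η γ H pol r P (H - (n+1)) s)
        (qr η γ H polt rt Pt (H - (n+1)) s)
        (fun b => ∑ a, pol (H - (n+1)) s b a * (u (H - (n+1)) s a b +
          ∑ s', P (H - (n+1)) s a b s' * wAux H pol (qr η γ H pol r P) P u n s'))
        (fun b => ∑ a, polt (H - (n+1)) s b a * (ut (H - (n+1)) s a b +
          ∑ s', Pt (H - (n+1)) s a b s' * wAux H polt (qr η γ H polt rt Pt) Pt ut n s'))
        (8 * η * ε * Cq * E) (H : ℝ)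
        (ε * (H : ℝ) + (ε + (ε * (H : ℝ) + (n : ℝ) * (ε * K))))
        (by positivity) (by positivity) (fun b _ => hGabs b) (fun b _ => hGd b)
        (fun b _ => hqrt0 _ hlt s b) (le_of_eq (hqrt1 _ hlt s))
        (hL1 _ hlt s)
      refine hfinal.trans (le_of_eq ?_)
      push_cast
      rw [hK]
      ring

  intro h hh
  refine ⟨fun s b => hQd h hh s b, fun s => hVd h s, fun s => ⟨?_, hL1 h hh s⟩, ?_, ?_⟩
  · -- Hellinger ≤ L1
    have h1 : ∑ b, (Real.sqrt (qr η γ H pol r P h s b) -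
        Real.sqrt (qr η γ H polt rt Pt h s b)) ^ 2 ≤
        ∑ b, |qr η γ H pol r P h s b - qr η γ H polt rt Pt h s b| :=
      Finset.sum_le_sum fun b _ => sq_sqrt_sub_le (hqr0 h hh s b) (hqrt0 h hh s b)
    have h2 : (0:ℝ) ≤ ∑ b, |qr η γ H pol r P h s b - qr η γ H polt rt Pt h s b| :=
      Finset.sum_nonneg fun b _ => abs_nonneg _
    linarith
  · -- leadU
    intro s a b
    have hm : H - (h + 1) ≤ H := Nat.sub_le _ _
    have hinner := weighted_diff Finset.univ (P h s a b) (Pt h s a b)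
      (fun s' => wAux H pol (qr η γ H pol r P) P u (H - (h + 1)) s')
      (fun s' => wAux H polt (qr η γ H polt rt Pt) Pt ut (H - (h + 1)) s')
      ε (H : ℝ) (((H - (h + 1) : ℕ) : ℝ) * (ε * K)) (by positivity) (by positivity)
      (fun s' _ => by
        rw [abs_of_nonneg (hW (H - (h + 1)) s').1]
        exact (hW (H - (h + 1)) s').2.trans (by exact_mod_cast Nat.cast_le.mpr hm))
      (fun s' _ => hWd (H - (h + 1)) hm s')
      (fun s' _ => hPt0 _ hh s a b s') (le_of_eq (hPt1 _ hh s a b)) (hP' _ hh s a b)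
    simp only [leadU, leadW]
    have heq : (u h s a b + ∑ s', P h s a b s' *
          wAux H pol (qr η γ H pol r P) P u (H - (h + 1)) s') -
        (ut h s a b + ∑ s', Pt h s a b s' *
          wAux H polt (qr η γ H polt rt Pt) Pt ut (H - (h + 1)) s') =
        (u h s a b - ut h s a b) +
        ((∑ s', P h s a b s' * wAux H pol (qr η γ H pol r P) P u (H - (h + 1)) s') -
         ∑ s', Pt h s a b s' * wAux H polt (qr η γ H polt rt Pt) Pt ut (H - (h + 1)) s') := by
      ring
    rw [heq]
    refine ((abs_add_le _ _).trans (add_le_add (hu' _ hh s a b) hinner)).trans ?_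
    have hcast : ((H - (h + 1) : ℕ) : ℝ) ≤ (H : ℝ) - 1 := by
      have hle : H - (h + 1) ≤ H - 1 := by omega
      calc ((H - (h + 1) : ℕ) : ℝ) ≤ ((H - 1 : ℕ) : ℝ) := Nat.cast_le.mpr hle
        _ = (H : ℝ) - 1 := by
            have : (1:ℕ) ≤ H := hH
            push_cast [this]
            ring
    have hA : ((H - (h + 1) : ℕ) : ℝ) * (ε * K) ≤ ((H : ℝ) - 1) * (ε * K) :=
      mul_le_mul_of_nonneg_right hcast (by positivity)
    have hB : ε * (1 + (H : ℝ)) ≤ ε * K := mul_le_mul_of_nonneg_left hK1H hε.le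
    nlinarith
  · -- leadW
    intro s
    simp only [leadW]
    refine (hWd (H - h) (Nat.sub_le _ _) s).trans ?_
    have hcast : ((H - h : ℕ) : ℝ) ≤ (H : ℝ) := by exact_mod_cast Nat.sub_le H h
    have h1 : (0:ℝ) ≤ ε * K := by positivity
    nlinarith
end
end

section
/- Elliptical potential lemma for matrices. Let d ≥ 1 and T ≥ 1 be integers, λ > 0, L > 0. Let X_1,…,X_T be real symmetric positive semidefinite d×d matrices with trace(X_t) ≤ L for every t, and set U_0 = λ·I_d and U_t = U_{t−1} + X_t for t = 1,…,T. Then each U_{t−1} is positive definite (hence invertible), and: (i) Σ_{t=1}^T √(trace(U_{t−1}⁻¹·X_t)) ≤ √( ((L·T/λ) / log(1 + L/λ)) · d·log(1 + L·T/(λ·d)) ); and (ii) Σ_{t=1}^T trace(U_{t−1}⁻¹·X_t) ≤ ((L/λ) / log(1 + L/λ)) · d·log(1 + L·T/(λ·d)). -/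
/-!
With `x_t = tr (U_t⁻¹ X_t)`, the matrix determinant lemma in the form
`det (U + X) ≥ det U · (1 + tr (U⁻¹ X))` (for `U ≻ 0`, `X ⪰ 0`) makes `∑ log (1 + x_t)`
telescope to at most `log det U_T - log det U_0`, and AM-GM on the eigenvalues of `U_T` bounds
this by `d log (1 + L T / (λ d))`. Since `U_t ⪰ λ I`, each `x_t` lies in `[0, L / λ]`, where
concavity of `log` gives `x ≤ (L / λ) / log (1 + L / λ) · log (1 + x)`; this is (ii), and
Cauchy-Schwarz turns it into (i).
-/

open Finset

noncomputable section

/-- `U_t = λ·I_d + Σ_{i<t} X_i`. -/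
def Umat (d : ℕ) (lam : ℝ) (X : ℕ → Matrix (Fin d) (Fin d) ℝ) (t : ℕ) :
    Matrix (Fin d) (Fin d) ℝ :=
  lam • (1 : Matrix (Fin d) (Fin d) ℝ) + ∑ i ∈ Finset.range t, X i

theorem Finset.one_add_sum_le_prod_one_add {ι R : Type*} [CommSemiring R] [PartialOrder R]
    [IsOrderedRing R] (s : Finset ι) {f : ι → R} (hf : ∀ i ∈ s, 0 ≤ f i) :
    1 + ∑ i ∈ s, f i ≤ ∏ i ∈ s, (1 + f i) := by
  classical
  induction s using Finset.cons_induction with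
  | empty => simp
  | cons a s ha ih =>
    have hfa : 0 ≤ f a := hf a (mem_cons_self a s)
    have hs : ∀ i ∈ s, 0 ≤ f i := fun i hi => hf i (mem_cons_of_mem hi)
    calc 1 + ∑ i ∈ cons a s ha, f i ≤ 1 + f a + ∑ i ∈ s, f i + f a * ∑ i ∈ s, f i := by
          rw [sum_cons, ← add_assoc]
          exact le_add_of_nonneg_right (mul_nonneg hfa (sum_nonneg hs))
      _ = (1 + f a) * (1 + ∑ i ∈ s, f i) := by ring
      _ ≤ ∏ i ∈ cons a s ha, (1 + f i) := by
          rw [prod_cons]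
          exact mul_le_mul_of_nonneg_left (ih hs) (add_nonneg zero_le_one hfa)

theorem Real.sum_log_le_card_mul_log_sum_div {ι : Type*} {s : Finset ι} (hs : s.Nonempty)
    {z : ι → ℝ} (hz : ∀ i ∈ s, 0 < z i) :
    ∑ i ∈ s, Real.log (z i) ≤ #s * Real.log ((∑ i ∈ s, z i) / #s) := by
  have hcard : (0 : ℝ) < #s := by exact_mod_cast hs.card_pos
  have jensen := strictConcaveOn_log_Ioi.concaveOn.le_map_sum (t := s)
    (w := fun _ => (#s : ℝ)⁻¹) (p := z) (fun _ _ => by positivity) (by simp [hcard.ne']) hz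
  simp only [smul_eq_mul, inv_mul_eq_div, ← sum_div] at jensen
  rwa [div_le_iff₀ hcard, mul_comm] at jensen

theorem Real.mul_log_one_add_le_mul_log_one_add {a x : ℝ} (ha : 0 < a) (hx₀ : 0 ≤ x)
    (hxa : x ≤ a) : x * Real.log (1 + a) ≤ a * Real.log (1 + x) := by
  have key := strictConcaveOn_log_Ioi.concaveOn.2 (Set.mem_Ioi.mpr one_pos)
    (Set.mem_Ioi.mpr (by linarith : (0 : ℝ) < 1 + a))
    (by rw [sub_nonneg, div_le_one ha]; exact hxa : 0 ≤ 1 - x / a) (by positivity : 0 ≤ x / a)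
    (by ring)
  have hcomb : (1 - x / a) • (1 : ℝ) + (x / a) • (1 + a) = 1 + x := by
    simp only [smul_eq_mul]; field_simp; ring
  rw [hcomb, smul_eq_mul, smul_eq_mul, Real.log_one, mul_zero, zero_add, div_mul_eq_mul_div,
    div_le_iff₀ ha] at key
  linarith

theorem Real.sum_le_div_log_one_add_mul_sum_log_one_add {ι : Type*} {s : Finset ι} {x : ι → ℝ}
    {a : ℝ} (ha : 0 < a) (hx₀ : ∀ i ∈ s, 0 ≤ x i) (hxa : ∀ i ∈ s, x i ≤ a) :
    ∑ i ∈ s, x i ≤ a / Real.log (1 + a) * ∑ i ∈ s, Real.log (1 + x i) := by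
  rw [div_mul_eq_mul_div, le_div_iff₀ (Real.log_pos (by linarith)), sum_mul, mul_sum]
  exact sum_le_sum fun i hi => Real.mul_log_one_add_le_mul_log_one_add ha (hx₀ i hi) (hxa i hi)

theorem Real.sum_sqrt_le_sqrt_card_mul_sum {ι : Type*} (s : Finset ι) {f : ι → ℝ}
    (hf : ∀ i ∈ s, 0 ≤ f i) : ∑ i ∈ s, √(f i) ≤ √(#s * ∑ i ∈ s, f i) := by
  have cs := Real.sum_mul_le_sqrt_mul_sqrt s (fun _ => 1) (fun i => √(f i))
  simp only [one_mul, one_pow, sum_const, nsmul_eq_mul, mul_one] at cs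
  rwa [sum_congr rfl fun i hi => Real.sq_sqrt (hf i hi), ← Real.sqrt_mul (Nat.cast_nonneg _)]
    at cs

namespace Matrix

variable {n : Type*} [Fintype n] [DecidableEq n]

open scoped MatrixOrder

theorem PosSemidef.exists_eq_conjTranspose_mul_self {A : Matrix n n ℝ} (hA : A.PosSemidef) :
    ∃ B : Matrix n n ℝ, A = Bᴴ * B := by
  refine ⟨CFC.sqrt A, ?_⟩
  rw [(nonneg_iff_posSemidef.mp (CFC.sqrt_nonneg A)).isHermitian.eq,
    CFC.sqrt_mul_sqrt_self A hA.nonneg]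

theorem PosSemidef.trace_mul_nonneg {A B : Matrix n n ℝ} (hA : A.PosSemidef)
    (hB : B.PosSemidef) : 0 ≤ (A * B).trace := by
  obtain ⟨C, rfl⟩ := hA.exists_eq_conjTranspose_mul_self
  rw [Matrix.mul_assoc, trace_mul_comm]
  exact (hB.mul_mul_conjTranspose_same C).trace_nonneg

theorem trace_mul_le_trace_mul_of_le {A B X : Matrix n n ℝ} (hAB : A ≤ B)
    (hX : X.PosSemidef) : (A * X).trace ≤ (B * X).trace := by
  have h := (le_iff.mp hAB).trace_mul_nonneg hX
  rwa [Matrix.sub_mul, trace_sub, sub_nonneg] at h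

theorem inv_smul_one_add_le {c : ℝ} (hc : 0 < c) {S : Matrix n n ℝ} (hS : S.PosSemidef) :
    (c • 1 + S)⁻¹ ≤ c⁻¹ • (1 : Matrix n n ℝ) := by
  set U := c • (1 : Matrix n n ℝ) + S with hU_def
  have hU : U.PosDef := (PosDef.one.smul hc).add_posSemidef hS
  have hUUinv : U * U⁻¹ = 1 := mul_nonsing_inv U (isUnit_iff_ne_zero.2 hU.det_pos.ne')
  have hUinvU : U⁻¹ * U = 1 := nonsing_inv_mul U (isUnit_iff_ne_zero.2 hU.det_pos.ne')
  have hSU : (S * U).PosSemidef := by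
    have hSU_eq : S * U = c • S + Sᴴ * S := by
      rw [hS.isHermitian.eq, hU_def, Matrix.mul_add, Matrix.mul_smul, Matrix.mul_one]
    rw [hSU_eq]
    exact (hS.smul hc.le).add (posSemidef_conjTranspose_mul_self S)
  -- since `U⁻¹ S = 1 - c U⁻¹`, the gap is `c⁻¹ U⁻¹ S = U⁻¹ (c⁻¹ S U) U⁻¹`, a congruence of `S U`
  have hgap : c⁻¹ • 1 - U⁻¹ = (U⁻¹)ᴴ * (c⁻¹ • (S * U)) * U⁻¹ := by
    have hS_eq : S = U - c • 1 := by rw [hU_def]; abel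
    rw [hU.inv.isHermitian.eq, Matrix.mul_smul, Matrix.smul_mul, Matrix.mul_assoc U⁻¹,
      Matrix.mul_assoc S, hUUinv, Matrix.mul_one, hS_eq, Matrix.mul_sub, hUinvU, Matrix.mul_smul,
      Matrix.mul_one, smul_sub, smul_smul, inv_mul_cancel₀ hc.ne', one_smul]
  rw [le_iff, hgap]
  exact (hSU.smul (inv_nonneg.mpr hc.le)).conjTranspose_mul_mul_same _

theorem IsHermitian.det_one_add {A : Matrix n n ℝ} (hA : A.IsHermitian) :
    (1 + A).det = ∏ i, (1 + hA.eigenvalues i) := by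
  have h : 1 + A = cfc (fun x : ℝ => 1 + x) A := by
    rw [cfc_const_add (1 : ℝ) (fun x => x) A, cfc_id' ℝ A, map_one]
  rw [h, hA.cfc_eq]
  simp [IsHermitian.cfc, -Unitary.conjStarAlgAut_apply, det_diagonal]

theorem PosSemidef.one_add_trace_le_det_one_add {A : Matrix n n ℝ} (hA : A.PosSemidef) :
    1 + A.trace ≤ (1 + A).det := by
  rw [hA.isHermitian.det_one_add, hA.isHermitian.trace_eq_sum_eigenvalues]
  simpa using one_add_sum_le_prod_one_add univ fun i _ => hA.eigenvalues_nonneg i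

theorem PosDef.det_mul_one_add_trace_inv_mul_le {U X : Matrix n n ℝ} (hU : U.PosDef)
    (hX : X.PosSemidef) : U.det * (1 + (U⁻¹ * X).trace) ≤ (U + X).det := by
  obtain ⟨C, hC⟩ := hU.inv.posSemidef.exists_eq_conjTranspose_mul_self
  have hsplit : U + X = U * (1 + U⁻¹ * X) := by
    rw [Matrix.mul_add, Matrix.mul_one, ← Matrix.mul_assoc,
      mul_nonsing_inv U (isUnit_iff_ne_zero.2 hU.det_pos.ne'), Matrix.one_mul]
  -- moving `Cᴴ` to the right replaces `U⁻¹ X = Cᴴ (C X)` by the PSD matrix `C X Cᴴ` without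
  -- changing the trace or `det (1 + ·)` (Weinstein-Aronszajn)
  have htr : (U⁻¹ * X).trace = (C * X * Cᴴ).trace := by
    rw [hC, Matrix.mul_assoc, trace_mul_comm]
  have hdet : (1 + U⁻¹ * X).det = (1 + C * X * Cᴴ).det := by
    rw [hC, Matrix.mul_assoc, det_one_add_mul_comm]
  rw [hsplit, det_mul, htr, hdet]
  exact mul_le_mul_of_nonneg_left (hX.mul_mul_conjTranspose_same C).one_add_trace_le_det_one_add
    hU.det_pos.le

theorem PosDef.log_det_le_card_mul_log_trace_div [Nonempty n] {P : Matrix n n ℝ} (hP : P.PosDef) :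
    Real.log P.det ≤ Fintype.card n * Real.log (P.trace / Fintype.card n) := by
  rw [hP.isHermitian.det_eq_prod_eigenvalues, hP.isHermitian.trace_eq_sum_eigenvalues]
  simp only [RCLike.ofReal_real_eq_id, id_eq]
  rw [Real.log_prod fun i _ => (hP.eigenvalues_pos i).ne']
  exact Real.sum_log_le_card_mul_log_sum_div univ_nonempty fun i _ => hP.eigenvalues_pos i

end Matrix

open Matrix

section Umat

variable {d : ℕ} {lam L : ℝ} {X : ℕ → Matrix (Fin d) (Fin d) ℝ}

theorem Umat_zero : Umat d lam X 0 = lam • 1 := by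
  simp [Umat]

theorem Umat_succ (t : ℕ) : Umat d lam X (t + 1) = Umat d lam X t + X t := by
  simp only [Umat, sum_range_succ, add_assoc]

theorem trace_Umat (t : ℕ) :
    (Umat d lam X t).trace = lam * d + ∑ i ∈ range t, (X i).trace := by
  simp [Umat, trace_sum]

theorem posDef_Umat (hlam : 0 < lam) {t : ℕ} (hX : ∀ i < t, (X i).PosSemidef) :
    (Umat d lam X t).PosDef :=
  (PosDef.one.smul hlam).add_posSemidef
    (posSemidef_sum _ fun i hi => hX i (mem_range.mp hi))


theorem trace_inv_Umat_mul_le (hlam : 0 < lam) {t : ℕ} (hX : ∀ i ≤ t, (X i).PosSemidef) :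
    ((Umat d lam X t)⁻¹ * X t).trace ≤ (X t).trace / lam := by
  have hS : (∑ i ∈ range t, X i).PosSemidef :=
    posSemidef_sum _ fun i hi => hX i (mem_range.mp hi).le
  calc ((Umat d lam X t)⁻¹ * X t).trace ≤ (lam⁻¹ • (1 : Matrix (Fin d) (Fin d) ℝ) * X t).trace :=
        trace_mul_le_trace_mul_of_le (inv_smul_one_add_le hlam hS) (hX t le_rfl)
    _ = (X t).trace / lam := by
        rw [Matrix.smul_mul, Matrix.one_mul, trace_smul, smul_eq_mul, inv_mul_eq_div]

theorem sum_log_one_add_trace_inv_Umat_mul_le (hlam : 0 < lam) {T : ℕ}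
    (hX : ∀ t < T, (X t).PosSemidef) :
    ∑ t ∈ range T, Real.log (1 + ((Umat d lam X t)⁻¹ * X t).trace) ≤
      Real.log (Umat d lam X T).det - Real.log (Umat d lam X 0).det := by
  rw [← sum_range_sub fun t => Real.log (Umat d lam X t).det]
  refine sum_le_sum fun t ht => ?_
  have ht := mem_range.mp ht
  have hU := posDef_Umat hlam fun i hi => hX i (hi.trans ht)
  have hx := hU.inv.posSemidef.trace_mul_nonneg (hX t ht)
  have hstep := hU.det_mul_one_add_trace_inv_mul_le (hX t ht)
  rw [← Umat_succ] at hstep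
  rw [le_sub_iff_add_le', ← Real.log_mul hU.det_pos.ne' (by positivity)]
  exact Real.log_le_log (mul_pos hU.det_pos (by positivity)) hstep

theorem log_det_Umat_sub_log_det_Umat_zero_le (hd : 1 ≤ d) (hlam : 0 < lam) {T : ℕ}
    (hX : ∀ t < T, (X t).PosSemidef) (htr : ∀ t < T, (X t).trace ≤ L) :
    Real.log (Umat d lam X T).det - Real.log (Umat d lam X 0).det ≤
      d * Real.log (1 + L * T / (lam * d)) := by
  have : Nonempty (Fin d) := ⟨⟨0, hd⟩⟩
  have hd' : (0 : ℝ) < d := by exact_mod_cast hd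
  have hU := posDef_Umat hlam hX
  have hdet0 : Real.log (Umat d lam X 0).det = d * Real.log lam := by
    rw [Umat_zero, det_smul, det_one, mul_one, Fintype.card_fin, Real.log_pow]
  have hdetT := hU.log_det_le_card_mul_log_trace_div
  rw [Fintype.card_fin] at hdetT
  have htrace : (Umat d lam X T).trace / d ≤ lam * (1 + L * T / (lam * d)) := by
    have hsum : ∑ t ∈ range T, (X t).trace ≤ T * L := by
      simpa using sum_le_sum fun t ht => htr t (mem_range.mp ht)
    rw [trace_Umat, div_le_iff₀ hd']
    field_simp
    linarith
  have htrace_pos : 0 < (Umat d lam X T).trace / d := div_pos hU.trace_pos hd'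
  calc Real.log (Umat d lam X T).det - Real.log (Umat d lam X 0).det
      ≤ d * Real.log ((Umat d lam X T).trace / d) - d * Real.log lam := by linarith
    _ ≤ d * Real.log (lam * (1 + L * T / (lam * d))) - d * Real.log lam := by
        gcongr
    _ = d * Real.log (1 + L * T / (lam * d)) := by
        rw [Real.log_mul hlam.ne' (pos_of_mul_pos_right (htrace_pos.trans_le htrace) hlam.le).ne']
        ring

end Umat

theorem elliptical_potential_matrices_general
    (d T : ℕ) (hd : 1 ≤ d) (lam L : ℝ) (hlam : 0 < lam) (hL : 0 < L)
    (X : ℕ → Matrix (Fin d) (Fin d) ℝ)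
    (hX : ∀ t < T, (X t).PosSemidef)
    (htr : ∀ t < T, (X t).trace ≤ L) :
    (∀ t < T, (Umat d lam X t).PosDef) ∧
    (∑ t ∈ Finset.range T, Real.sqrt (((Umat d lam X t)⁻¹ * X t).trace) ≤
      Real.sqrt ((L * T / lam / Real.log (1 + L / lam)) *
        ((d : ℝ) * Real.log (1 + L * T / (lam * d))))) ∧
    (∑ t ∈ Finset.range T, ((Umat d lam X t)⁻¹ * X t).trace ≤
      (L / lam / Real.log (1 + L / lam)) *
        ((d : ℝ) * Real.log (1 + L * T / (lam * d)))) := by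
  have hU : ∀ t < T, (Umat d lam X t).PosDef := fun t ht =>
    posDef_Umat hlam fun i hi => hX i (hi.trans ht)
  have hx₀ : ∀ t ∈ range T, 0 ≤ ((Umat d lam X t)⁻¹ * X t).trace := fun t ht =>
    (hU t (mem_range.mp ht)).inv.posSemidef.trace_mul_nonneg (hX t (mem_range.mp ht))
  have hxa : ∀ t ∈ range T, ((Umat d lam X t)⁻¹ * X t).trace ≤ L / lam := fun t ht =>
    (trace_inv_Umat_mul_le hlam fun i hi => hX i (hi.trans_lt (mem_range.mp ht))).trans
      (div_le_div_of_nonneg_right (htr t (mem_range.mp ht)) hlam.le)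
  have hlog := (sum_log_one_add_trace_inv_Umat_mul_le hlam hX).trans
    (log_det_Umat_sub_log_det_Umat_zero_le hd hlam hX htr)
  have hsum := (Real.sum_le_div_log_one_add_mul_sum_log_one_add (div_pos hL hlam) hx₀ hxa).trans
    (mul_le_mul_of_nonneg_left hlog
      (div_nonneg (div_pos hL hlam).le (Real.log_nonneg (by linarith [div_pos hL hlam]))))
  refine ⟨hU, ?_, hsum⟩
  calc ∑ t ∈ range T, √((Umat d lam X t)⁻¹ * X t).trace
      ≤ √(T * ∑ t ∈ range T, ((Umat d lam X t)⁻¹ * X t).trace) := by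
        simpa using Real.sum_sqrt_le_sqrt_card_mul_sum (range T) hx₀
    _ ≤ _ := Real.sqrt_le_sqrt <|
        (mul_le_mul_of_nonneg_left hsum (Nat.cast_nonneg T)).trans_eq (by ring)

/-- Elliptical potential lemma for matrices: with `U_0 = λI_d`, `U_t = U_{t−1} + X_t`,
`X_t ⪰ 0`, `tr(X_t) ≤ L`, each `U_{t−1}` is positive definite and
`Σ_t √tr(U_{t−1}⁻¹X_t) ≤ √((LT/λ)/log(1+L/λ) · d log(1+LT/(λd)))` and
`Σ_t tr(U_{t−1}⁻¹X_t) ≤ (L/λ)/log(1+L/λ) · d log(1+LT/(λd))`. -/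
theorem elliptical_potential_matrices
    (d T : ℕ) (hd : 1 ≤ d) (hT : 1 ≤ T) (lam L : ℝ) (hlam : 0 < lam) (hL : 0 < L)
    (X : ℕ → Matrix (Fin d) (Fin d) ℝ)
    (hX : ∀ t < T, (X t).PosSemidef)
    (htr : ∀ t < T, (X t).trace ≤ L) :
    (∀ t < T, (Umat d lam X t).PosDef) ∧
    (∑ t ∈ Finset.range T, Real.sqrt (((Umat d lam X t)⁻¹ * X t).trace) ≤
      Real.sqrt ((L * T / lam / Real.log (1 + L / lam)) *
        ((d : ℝ) * Real.log (1 + L * T / (lam * d))))) ∧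
    (∑ t ∈ Finset.range T, ((Umat d lam X t)⁻¹ * X t).trace ≤
      (L / lam / Real.log (1 + L / lam)) *
        ((d : ℝ) * Real.log (1 + L * T / (lam * d)))) :=
  elliptical_potential_matrices_general d T hd lam L hlam hL X hX htr
end
end
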